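/- arXiv:1802.05566 — 12 statements merged into one kernel-verified Lean document; each statement's English description precedes it below -/
import Mathlib

section
/- There exists a bounded linear operator L : Ψ → V such that ū(φ + ψ) = ū(φ) + Lψ for all φ, ψ ∈ Ψ (so the map φ ↦ ū(φ) is affine and everywhere Gâteaux differentiable with derivative L); the operator L is characterized by the equation ⟪C(e(Lψ)), e v⟫_Ψ = ⟪Cψ, e v⟫_Ψ for all v ∈ V and ψ ∈ Ψ. -/
open scoped RealInnerProductSpace

/-!
Subtracting the weak equations for `ū(φ₁)` and `ū(φ₂)` eliminates `ℓ`: the difference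
`ū(φ₁) - ū(φ₂) ∈ V` solves `a(w, v) = ⟪C (φ₁ - φ₂), e v⟫` on `V`. Coercivity of `a` on `V` makes
solutions of such problems unique, so `L ψ := ū(ψ) - ū(0)` is additive, homogeneous and equal to
`ū(φ + ψ) - ū(φ)` for every `φ`; testing its equation with `v = L ψ` gives
`c₀ ‖L ψ‖² ≤ ‖C‖ ‖e‖ ‖ψ‖ ‖L ψ‖`, hence boundedness.
-/

section CoerciveForm

variable {X Ψ : Type*}
  [NormedAddCommGroup X] [InnerProductSpace ℝ X]
  [NormedAddCommGroup Ψ] [InnerProductSpace ℝ Ψ]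
  {V : Submodule ℝ X} {e : X →L[ℝ] Ψ} {C : Ψ →L[ℝ] Ψ} {c₀ : ℝ}

theorem eq_of_forall_inner_eq (hc₀ : 0 < c₀)
    (hacoer : ∀ v ∈ V, c₀ * ‖v‖ ^ 2 ≤ ⟪C (e v), e v⟫) {w₁ w₂ : X} (hw : w₁ - w₂ ∈ V)
    (h : ∀ v ∈ V, ⟪C (e w₁), e v⟫ = ⟪C (e w₂), e v⟫) : w₁ = w₂ := by
  have hzero : ⟪C (e (w₁ - w₂)), e (w₁ - w₂)⟫ = 0 := by
    rw [show C (e (w₁ - w₂)) = C (e w₁) - C (e w₂) by simp, inner_sub_left, h _ hw, sub_self]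
  have hnorm : ‖w₁ - w₂‖ ^ 2 ≤ 0 := by
    have := hacoer _ hw
    rw [hzero] at this
    exact nonpos_of_mul_nonpos_right this hc₀
  rw [← sub_eq_zero, ← norm_eq_zero]
  exact pow_eq_zero_iff two_ne_zero |>.mp (le_antisymm hnorm (sq_nonneg _))

theorem norm_le_of_forall_inner_eq (hc₀ : 0 < c₀)
    (hacoer : ∀ v ∈ V, c₀ * ‖v‖ ^ 2 ≤ ⟪C (e v), e v⟫) {w : X} {ψ : Ψ} (hw : w ∈ V)
    (h : ∀ v ∈ V, ⟪C (e w), e v⟫ = ⟪C ψ, e v⟫) : ‖w‖ ≤ ‖C‖ * ‖e‖ / c₀ * ‖ψ‖ := by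
  have hsq : c₀ * ‖w‖ ^ 2 ≤ ‖C‖ * ‖e‖ * ‖ψ‖ * ‖w‖ :=
    calc c₀ * ‖w‖ ^ 2 ≤ ⟪C (e w), e w⟫ := hacoer w hw
      _ = ⟪C ψ, e w⟫ := h w hw
      _ ≤ ‖C ψ‖ * ‖e w‖ := real_inner_le_norm _ _
      _ ≤ (‖C‖ * ‖ψ‖) * (‖e‖ * ‖w‖) :=
        mul_le_mul (C.le_opNorm ψ) (e.le_opNorm w) (norm_nonneg _) (by positivity)
      _ = ‖C‖ * ‖e‖ * ‖ψ‖ * ‖w‖ := by ring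
  rcases (norm_nonneg w).eq_or_lt with hw0 | hw0
  · rw [← hw0]
    positivity
  · rw [div_mul_eq_mul_div, le_div_iff₀ hc₀]
    nlinarith

theorem isBoundedLinearMap_of_forall_inner_eq (hc₀ : 0 < c₀)
    (hacoer : ∀ v ∈ V, c₀ * ‖v‖ ^ 2 ≤ ⟪C (e v), e v⟫) {u : Ψ → X} (hu_mem : ∀ ψ, u ψ ∈ V)
    (hu : ∀ ψ, ∀ v ∈ V, ⟪C (e (u ψ)), e v⟫ = ⟪C ψ, e v⟫) : IsBoundedLinearMap ℝ u := by
  refine IsLinearMap.with_bound ⟨fun ψ₁ ψ₂ ↦ ?_, fun c ψ ↦ ?_⟩ _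
    fun ψ ↦ norm_le_of_forall_inner_eq hc₀ hacoer (hu_mem ψ) (hu ψ)
  · refine eq_of_forall_inner_eq hc₀ hacoer
      (V.sub_mem (hu_mem _) (V.add_mem (hu_mem _) (hu_mem _))) fun v hv ↦ ?_
    simp only [map_add, inner_add_left, hu _ v hv]
  · refine eq_of_forall_inner_eq hc₀ hacoer
      (V.sub_mem (hu_mem _) (V.smul_mem c (hu_mem _))) fun v hv ↦ ?_
    simp only [map_smul, real_inner_smul_left, hu _ v hv]

end CoerciveForm

theorem stmt_1_general
    {X Ψ : Type*}
    [NormedAddCommGroup X] [InnerProductSpace ℝ X]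
    [NormedAddCommGroup Ψ] [InnerProductSpace ℝ Ψ]
    (V : Submodule ℝ X)
    (e : X →L[ℝ] Ψ) (C : Ψ →L[ℝ] Ψ)
    (c₀ : ℝ) (hc₀ : 0 < c₀)
    (hacoer : ∀ v ∈ V, c₀ * ‖v‖ ^ 2 ≤ ⟪C (e v), e v⟫)
    (ℓ : X →L[ℝ] ℝ) (g : X)
    (ubar : Ψ → X)
    (hubar_mem : ∀ φ : Ψ, ubar φ - g ∈ V)
    (hubar_weak : ∀ φ : Ψ, ∀ v ∈ V, ⟪C (e (ubar φ) - φ), e v⟫ = ℓ v) :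
    ∃ L : Ψ →L[ℝ] X,
      (∀ ψ : Ψ, L ψ ∈ V) ∧
      (∀ φ ψ : Ψ, ubar (φ + ψ) = ubar φ + L ψ) ∧
      (∀ ψ : Ψ, ∀ v ∈ V, ⟪C (e (L ψ)), e v⟫ = ⟪C ψ, e v⟫) := by
  have hdiff_mem : ∀ φ₁ φ₂, ubar φ₁ - ubar φ₂ ∈ V := fun φ₁ φ₂ ↦ by
    simpa using V.sub_mem (hubar_mem φ₁) (hubar_mem φ₂)
  have hdiff_weak : ∀ φ₁ φ₂, ∀ v ∈ V,
      ⟪C (e (ubar φ₁ - ubar φ₂)), e v⟫ = ⟪C (φ₁ - φ₂), e v⟫ := fun φ₁ φ₂ v hv ↦ by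
    have h₁ := hubar_weak φ₁ v hv
    have h₂ := hubar_weak φ₂ v hv
    simp only [map_sub, inner_sub_left] at h₁ h₂ ⊢
    linarith
  have hL := isBoundedLinearMap_of_forall_inner_eq hc₀ hacoer (fun ψ ↦ hdiff_mem ψ 0)
    fun ψ ↦ by simpa using hdiff_weak ψ 0
  set L := hL.toContinuousLinearMap
  have hL_apply : ∀ ψ, L ψ = ubar ψ - ubar 0 := fun _ ↦ rfl
  refine ⟨L, fun ψ ↦ hdiff_mem ψ 0, fun φ ψ ↦ ?_, fun ψ ↦ by simpa [hL_apply] using hdiff_weak ψ 0⟩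
  rw [← sub_eq_iff_eq_add', hL_apply]
  refine eq_of_forall_inner_eq hc₀ hacoer ?_ fun v hv ↦ ?_
  · simpa using V.sub_mem (hdiff_mem (φ + ψ) φ) (hdiff_mem ψ 0)
  · rw [hdiff_weak _ _ v hv, hdiff_weak _ _ v hv, add_sub_cancel_left, sub_zero]

/-- Affinity and Gâteaux differentiability of the minimizer map `φ ↦ ū(φ)`:
there is a bounded linear operator `L : Ψ → V` with `ū(φ + ψ) = ū(φ) + L ψ`,
characterized by `⟪C (e (L ψ)), e v⟫ = ⟪C ψ, e v⟫` for all `v ∈ V`. -/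
theorem stmt_1
    {X Ψ : Type*}
    [NormedAddCommGroup X] [InnerProductSpace ℝ X] [CompleteSpace X]
    [NormedAddCommGroup Ψ] [InnerProductSpace ℝ Ψ] [CompleteSpace Ψ]
    (V : Submodule ℝ X) (hV : IsClosed (V : Set X))
    (e : X →L[ℝ] Ψ) (C : Ψ →L[ℝ] Ψ)
    (hCsym : ∀ φ ψ : Ψ, ⟪C φ, ψ⟫ = ⟪φ, C ψ⟫)
    (cstar : ℝ) (hcstar : 0 < cstar)
    (hCcoer : ∀ ψ : Ψ, cstar * ‖ψ‖ ^ 2 ≤ ⟪C ψ, ψ⟫)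
    (c₀ : ℝ) (hc₀ : 0 < c₀)
    (hacoer : ∀ v ∈ V, c₀ * ‖v‖ ^ 2 ≤ ⟪C (e v), e v⟫)
    (ℓ : X →L[ℝ] ℝ) (g : X) (α : ℝ) (hα : 0 ≤ α)
    (E : X → Ψ → ℝ)
    (hE : ∀ u φ, E u φ =
      (1 / 2) * ⟪C (e u - φ), e u - φ⟫ + (α / 2) * ‖φ‖ ^ 2 - ℓ u)
    (ubar : Ψ → X)
    (hubar_mem : ∀ φ : Ψ, ubar φ - g ∈ V)
    (hubar_weak : ∀ φ : Ψ, ∀ v ∈ V, ⟪C (e (ubar φ) - φ), e v⟫ = ℓ v)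
    (hubar_min : ∀ φ : Ψ, ∀ v : X, v - g ∈ V → E (ubar φ) φ ≤ E v φ) :
    ∃ L : Ψ →L[ℝ] X,
      (∀ ψ : Ψ, L ψ ∈ V) ∧
      (∀ φ ψ : Ψ, ubar (φ + ψ) = ubar φ + L ψ) ∧
      (∀ ψ : Ψ, ∀ v ∈ V, ⟪C (e (L ψ)), e v⟫ = ⟪C ψ, e v⟫) :=
  stmt_1_general V e C c₀ hc₀ hacoer ℓ g ubar hubar_mem hubar_weak
end

section
/- The reduced energy E_* : Ψ → ℝ defined by E_*(φ) := E(ū(φ), φ) = min_{v ∈ g+V} E(v, φ) is everywhere Gâteaux differentiable, and its derivative is given by (∂E_*)(φ)[ψ] = ⟪αφ − C(e ū(φ) − φ), ψ⟫_Ψ for all φ, ψ ∈ Ψ. -/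
open scoped RealInnerProductSpace

/-!
The constraint `ū(φ) ∈ g + V` and the Galerkin equations depend affinely on `φ`, so by
uniqueness of Galerkin solutions (coercivity of `a` on `V`) the minimiser moves affinely along
a line: `ū(φ + εψ) = ū(φ) + ε w` with `w = ū(φ + ψ) − ū(φ) ∈ V`. Hence `ε ↦ E_*(φ + εψ)` is
the energy along a line in `X × Ψ`, whose derivative at `0` is
`⟪C(e ū(φ) − φ), e w − ψ⟫ + α⟪φ, ψ⟫ − ℓ w`; the Galerkin equation tested with `w` cancels
`⟪C(e ū(φ) − φ), e w⟫` against `ℓ w`.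
-/

theorem sub_mem_of_forall_sub_mem {ι X : Type*} [AddCommGroup X] [Module ℝ X]
    {V : Submodule ℝ X} {g : X} {u : ι → X} (hu : ∀ i, u i - g ∈ V) (i j : ι) :
    u i - u j ∈ V := by
  simpa using V.sub_mem (hu i) (hu j)

section Galerkin

variable {X Ψ : Type*}
  [NormedAddCommGroup X] [InnerProductSpace ℝ X]
  [NormedAddCommGroup Ψ] [InnerProductSpace ℝ Ψ]
  {V : Submodule ℝ X} {e : X →L[ℝ] Ψ} {C : Ψ →L[ℝ] Ψ}

theorem eq_of_forall_inner_eq_of_coercive {c₀ : ℝ} (hc₀ : 0 < c₀)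
    (hacoer : ∀ v ∈ V, c₀ * ‖v‖ ^ 2 ≤ ⟪C (e v), e v⟫)
    {d₁ d₂ : X} (hd₁ : d₁ ∈ V) (hd₂ : d₂ ∈ V)
    (h : ∀ v ∈ V, ⟪C (e d₁), e v⟫ = ⟪C (e d₂), e v⟫) :
    d₁ = d₂ := by
  have hd : d₁ - d₂ ∈ V := V.sub_mem hd₁ hd₂
  have hzero : ⟪C (e (d₁ - d₂)), e (d₁ - d₂)⟫ = 0 := by
    rw [map_sub e, map_sub C, inner_sub_left, ← map_sub e, h _ hd, sub_self]
  have hnorm : ‖d₁ - d₂‖ ^ 2 = 0 :=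
    le_antisymm (nonpos_of_mul_nonpos_right (hzero ▸ hacoer _ hd) hc₀) (sq_nonneg _)
  exact sub_eq_zero.mp (norm_eq_zero.mp (pow_eq_zero_iff two_ne_zero |>.mp hnorm))

variable {ℓ : X →L[ℝ] ℝ} {g : X} {ubar : Ψ → X}

theorem inner_galerkin_solution_sub
    (hubar_weak : ∀ φ : Ψ, ∀ v ∈ V, ⟪C (e (ubar φ) - φ), e v⟫ = ℓ v)
    (φ₁ φ₂ : Ψ) {v : X} (hv : v ∈ V) :
    ⟪C (e (ubar φ₁ - ubar φ₂)), e v⟫ = ⟪C (φ₁ - φ₂), e v⟫ := by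
  have h₁ := hubar_weak φ₁ v hv
  have h₂ := hubar_weak φ₂ v hv
  simp only [map_sub, inner_sub_left] at h₁ h₂ ⊢
  linarith

theorem galerkin_solution_add_smul {c₀ : ℝ} (hc₀ : 0 < c₀)
    (hacoer : ∀ v ∈ V, c₀ * ‖v‖ ^ 2 ≤ ⟪C (e v), e v⟫)
    (hubar_mem : ∀ φ : Ψ, ubar φ - g ∈ V)
    (hubar_weak : ∀ φ : Ψ, ∀ v ∈ V, ⟪C (e (ubar φ) - φ), e v⟫ = ℓ v)
    (φ ψ : Ψ) (ε : ℝ) :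
    ubar (φ + ε • ψ) = ubar φ + ε • (ubar (φ + ψ) - ubar φ) := by
  rw [← sub_eq_iff_eq_add']
  refine eq_of_forall_inner_eq_of_coercive hc₀ hacoer
    (sub_mem_of_forall_sub_mem hubar_mem _ _)
    (V.smul_mem ε (sub_mem_of_forall_sub_mem hubar_mem _ _)) fun v hv => ?_
  rw [inner_galerkin_solution_sub hubar_weak _ _ hv, map_smul, map_smul, real_inner_smul_left,
    inner_galerkin_solution_sub hubar_weak _ _ hv]
  simp only [add_sub_cancel_left, map_smul, real_inner_smul_left]

end Galerkin

theorem hasDerivAt_add_smul {F : Type*} [NormedAddCommGroup F] [NormedSpace ℝ F]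
    (a b : F) (t : ℝ) :
    HasDerivAt (fun s : ℝ => a + s • b) b t := by
  simpa using ((hasDerivAt_id t).smul_const b).const_add a

theorem hasDerivAt_energy_line {X Ψ : Type*}
    [NormedAddCommGroup X] [InnerProductSpace ℝ X]
    [NormedAddCommGroup Ψ] [InnerProductSpace ℝ Ψ]
    {e : X →L[ℝ] Ψ} {C : Ψ →L[ℝ] Ψ} (hCsym : ∀ φ ψ : Ψ, ⟪C φ, ψ⟫ = ⟪φ, C ψ⟫)
    {ℓ : X →L[ℝ] ℝ} {α : ℝ} {E : X → Ψ → ℝ}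
    (hE : ∀ u φ, E u φ = (1 / 2) * ⟪C (e u - φ), e u - φ⟫ + (α / 2) * ‖φ‖ ^ 2 - ℓ u)
    (u w : X) (φ ψ : Ψ) :
    HasDerivAt (fun t : ℝ => E (u + t • w) (φ + t • ψ))
      (⟪C (e u - φ), e w - ψ⟫ + α * ⟪φ, ψ⟫ - ℓ w) 0 := by
  have hres : HasDerivAt (fun t : ℝ => e (u + t • w) - (φ + t • ψ)) (e w - ψ) 0 :=
    (e.hasFDerivAt.comp_hasDerivAt 0 (hasDerivAt_add_smul u w 0)).sub (hasDerivAt_add_smul φ ψ 0)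
  have hquad := ((C.hasFDerivAt.comp_hasDerivAt 0 hres).inner ℝ hres).const_mul (1 / 2 : ℝ)
  have hnorm := (hasDerivAt_add_smul φ ψ 0).norm_sq.const_mul (α / 2)
  have hlin := ℓ.hasFDerivAt.comp_hasDerivAt 0 (hasDerivAt_add_smul u w 0)
  refine (((hquad.add hnorm).sub hlin).congr_of_eventuallyEq
    (.of_forall fun t => hE _ _)).congr_deriv ?_
  simp only [Function.comp_apply, zero_smul, add_zero]
  rw [hCsym, real_inner_comm (e u - φ)]
  ring

theorem stmt_3_general
    {X Ψ : Type*}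
    [NormedAddCommGroup X] [InnerProductSpace ℝ X]
    [NormedAddCommGroup Ψ] [InnerProductSpace ℝ Ψ]
    (V : Submodule ℝ X)
    (e : X →L[ℝ] Ψ) (C : Ψ →L[ℝ] Ψ)
    (hCsym : ∀ φ ψ : Ψ, ⟪C φ, ψ⟫ = ⟪φ, C ψ⟫)
    (c₀ : ℝ) (hc₀ : 0 < c₀)
    (hacoer : ∀ v ∈ V, c₀ * ‖v‖ ^ 2 ≤ ⟪C (e v), e v⟫)
    (ℓ : X →L[ℝ] ℝ) (g : X) (α : ℝ)
    (E : X → Ψ → ℝ)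
    (hE : ∀ u φ, E u φ =
      (1 / 2) * ⟪C (e u - φ), e u - φ⟫ + (α / 2) * ‖φ‖ ^ 2 - ℓ u)
    (ubar : Ψ → X)
    (hubar_mem : ∀ φ : Ψ, ubar φ - g ∈ V)
    (hubar_weak : ∀ φ : Ψ, ∀ v ∈ V, ⟪C (e (ubar φ) - φ), e v⟫ = ℓ v)
    (Estar : Ψ → ℝ)
    (hEstar : ∀ φ : Ψ, Estar φ = E (ubar φ) φ) :
    ∀ φ ψ : Ψ,
      HasDerivAt (fun ε : ℝ => Estar (φ + ε • ψ))
        ⟪α • φ - C (e (ubar φ) - φ), ψ⟫ 0 := by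
  intro φ ψ
  set w := ubar (φ + ψ) - ubar φ
  have hline : (fun ε : ℝ => Estar (φ + ε • ψ)) = fun ε => E (ubar φ + ε • w) (φ + ε • ψ) := by
    funext ε
    rw [hEstar, galerkin_solution_add_smul hc₀ hacoer hubar_mem hubar_weak]
  have hw := hubar_weak φ w (sub_mem_of_forall_sub_mem hubar_mem _ _)
  rw [hline]
  convert hasDerivAt_energy_line hCsym hE (ubar φ) w φ ψ using 1
  rw [inner_sub_right, hw, inner_sub_left, real_inner_smul_left]
  ring

/-- The reduced energy `E_*(φ) = E(ū(φ), φ)` is everywhere Gâteaux differentiable with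
`(∂E_*)(φ)[ψ] = ⟪αφ − C(e ū(φ) − φ), ψ⟫` for all `φ, ψ ∈ Ψ`. -/
theorem stmt_3
    {X Ψ : Type*}
    [NormedAddCommGroup X] [InnerProductSpace ℝ X] [CompleteSpace X]
    [NormedAddCommGroup Ψ] [InnerProductSpace ℝ Ψ] [CompleteSpace Ψ]
    (V : Submodule ℝ X) (hV : IsClosed (V : Set X))
    (e : X →L[ℝ] Ψ) (C : Ψ →L[ℝ] Ψ)
    (hCsym : ∀ φ ψ : Ψ, ⟪C φ, ψ⟫ = ⟪φ, C ψ⟫)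
    (cstar : ℝ) (hcstar : 0 < cstar)
    (hCcoer : ∀ ψ : Ψ, cstar * ‖ψ‖ ^ 2 ≤ ⟪C ψ, ψ⟫)
    (c₀ : ℝ) (hc₀ : 0 < c₀)
    (hacoer : ∀ v ∈ V, c₀ * ‖v‖ ^ 2 ≤ ⟪C (e v), e v⟫)
    (ℓ : X →L[ℝ] ℝ) (g : X) (α : ℝ) (hα : 0 ≤ α)
    (E : X → Ψ → ℝ)
    (hE : ∀ u φ, E u φ =
      (1 / 2) * ⟪C (e u - φ), e u - φ⟫ + (α / 2) * ‖φ‖ ^ 2 - ℓ u)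
    (ubar : Ψ → X)
    (hubar_mem : ∀ φ : Ψ, ubar φ - g ∈ V)
    (hubar_weak : ∀ φ : Ψ, ∀ v ∈ V, ⟪C (e (ubar φ) - φ), e v⟫ = ℓ v)
    (hubar_min : ∀ φ : Ψ, ∀ v : X, v - g ∈ V → E (ubar φ) φ ≤ E v φ)
    (Estar : Ψ → ℝ)
    (hEstar : ∀ φ : Ψ, Estar φ = E (ubar φ) φ) :
    ∀ φ ψ : Ψ,
      HasDerivAt (fun ε : ℝ => Estar (φ + ε • ψ))
        ⟪α • φ - C (e (ubar φ) - φ), ψ⟫ 0 :=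
  stmt_3_general V e C hCsym c₀ hc₀ hacoer ℓ g α E hE ubar hubar_mem hubar_weak Estar hEstar
end

section
/- Energy decay for the extended Maxwell model (Theorem 3.1(ii)): let (u, φ) : [0, T] → X × Ψ be continuously differentiable with u(t) ∈ g + V for all t, satisfying for all t ∈ (0, T): (a) ⟪C(e u(t) − φ(t)), e v⟫_Ψ = ℓ(v) for all v ∈ V, and (b) η φ'(t) + α φ(t) − C(e u(t) − φ(t)) = 0 in Ψ. Then the function t ↦ E(u(t), φ(t)) is differentiable on (0, T) and (d/dt) E(u(t), φ(t)) = −η‖φ'(t)‖_Ψ² ≤ 0. -/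
/-!
Differentiating the energy along the solution gives
`⟪σ, e u' - φ'⟫ + α ⟪φ, φ'⟫ - ℓ u'` with `σ = C (e u - φ)`, using the symmetry of `C`.
Since `u - g` stays in the closed subspace `V`, its velocity `u'` lies in `V`, so the equilibrium
equation (a) tested with `v = u'` cancels `⟪σ, e u'⟫` against `ℓ u'`; the flow rule (b) replaces
`σ` by `η φ' + α φ`, leaving `-η ‖φ'‖²`.
-/

open scoped RealInnerProductSpace
open Filter Topology

theorem Submodule.mem_of_hasDerivAt_of_eventually_sub_mem {E : Type*} [NormedAddCommGroup E]
    [NormedSpace ℝ E] (V : Submodule ℝ E) (hV : IsClosed (V : Set E)) {u : ℝ → E} {u' g : E}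
    {t : ℝ} (hu : HasDerivAt u u' t) (hmem : ∀ᶠ s in 𝓝 t, u s - g ∈ V) : u' ∈ V := by
  refine hV.mem_of_tendsto (hasDerivAt_iff_tendsto_slope.mp hu) ?_
  filter_upwards [nhdsWithin_le_nhds hmem] with s hs
  have := V.smul_mem (s - t)⁻¹ (V.sub_mem hs hmem.self_of_nhds)
  simpa [slope_def_module, sub_sub_sub_cancel_right] using this

theorem HasDerivAt.half_inner_apply_self {E : Type*} [NormedAddCommGroup E]
    [InnerProductSpace ℝ E] {C : E →L[ℝ] E} (hC : ∀ x y : E, ⟪C x, y⟫ = ⟪x, C y⟫)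
    {w : ℝ → E} {w' : E} {t : ℝ} (hw : HasDerivAt w w' t) :
    HasDerivAt (fun s => (1 / 2) * ⟪C (w s), w s⟫) ⟪C (w t), w'⟫ t := by
  have h := ((C.hasFDerivAt.comp_hasDerivAt t hw).inner ℝ hw).const_mul (1 / 2 : ℝ)
  refine h.congr_deriv ?_
  rw [Function.comp_apply, hC w', real_inner_comm w']
  ring

theorem HasDerivAt.half_norm_sq {E : Type*} [NormedAddCommGroup E] [InnerProductSpace ℝ E]
    {w : ℝ → E} {w' : E} {t : ℝ} (hw : HasDerivAt w w' t) :
    HasDerivAt (fun s => (1 / 2) * ‖w s‖ ^ 2) ⟪w t, w'⟫ t := by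
  simpa only [ContinuousLinearMap.id_apply, ← real_inner_self_eq_norm_sq] using
    hw.half_inner_apply_self (C := ContinuousLinearMap.id ℝ E) fun _ _ => rfl

theorem stmt_5_general
    {X Ψ : Type*}
    [NormedAddCommGroup X] [InnerProductSpace ℝ X]
    [NormedAddCommGroup Ψ] [InnerProductSpace ℝ Ψ]
    (V : Submodule ℝ X) (hV : IsClosed (V : Set X))
    (e : X →L[ℝ] Ψ) (C : Ψ →L[ℝ] Ψ)
    (hCsym : ∀ φ ψ : Ψ, ⟪C φ, ψ⟫ = ⟪φ, C ψ⟫)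
    (ℓ : X →L[ℝ] ℝ) (g : X) (η α : ℝ) (hη : 0 < η)
    (E : X → Ψ → ℝ)
    (hE : ∀ u φ, E u φ =
      (1 / 2) * ⟪C (e u - φ), e u - φ⟫ + (α / 2) * ‖φ‖ ^ 2 - ℓ u)
    (T : ℝ)
    (u : ℝ → X) (φ : ℝ → Ψ) (u' : ℝ → X) (φ' : ℝ → Ψ)
    (hu_deriv : ∀ t ∈ Set.Icc (0 : ℝ) T, HasDerivAt u (u' t) t)
    (hφ_deriv : ∀ t ∈ Set.Icc (0 : ℝ) T, HasDerivAt φ (φ' t) t)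
    (hu_mem : ∀ t ∈ Set.Icc (0 : ℝ) T, u t - g ∈ V)
    (heq1 : ∀ t ∈ Set.Ioo (0 : ℝ) T, ∀ v ∈ V, ⟪C (e (u t) - φ t), e v⟫ = ℓ v)
    (heq2 : ∀ t ∈ Set.Ioo (0 : ℝ) T,
      η • φ' t + α • φ t - C (e (u t) - φ t) = 0) :
    ∀ t ∈ Set.Ioo (0 : ℝ) T,
      HasDerivAt (fun s : ℝ => E (u s) (φ s)) (-(η * ‖φ' t‖ ^ 2)) t ∧
      -(η * ‖φ' t‖ ^ 2) ≤ 0 := by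
  intro t ht
  have htI := Set.mem_Icc_of_Ioo ht
  have hu := hu_deriv t htI
  have hφ := hφ_deriv t htI
  have hu'V : u' t ∈ V := V.mem_of_hasDerivAt_of_eventually_sub_mem hV hu <|
    Filter.mem_of_superset (isOpen_Ioo.mem_nhds ht) fun s hs => hu_mem s (Set.mem_Icc_of_Ioo hs)
  have hstress : C (e (u t) - φ t) = η • φ' t + α • φ t := (sub_eq_zero.mp (heq2 t ht)).symm
  have hderiv := (((e.hasFDerivAt.comp_hasDerivAt t hu).sub hφ).half_inner_apply_self hCsym).add
    (hφ.half_norm_sq.const_mul α) |>.sub (ℓ.hasFDerivAt.comp_hasDerivAt t hu)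
  have hdissipation : ⟪C (e (u t) - φ t), e (u' t) - φ' t⟫ + α * ⟪φ t, φ' t⟫ - ℓ (u' t)
      = -(η * ‖φ' t‖ ^ 2) := by
    rw [inner_sub_right, heq1 t ht _ hu'V, hstress, inner_add_left, real_inner_smul_left,
      real_inner_smul_left, real_inner_self_eq_norm_sq, real_inner_comm (φ' t)]
    ring
  refine ⟨(hderiv.congr_deriv hdissipation).congr_of_eventuallyEq (.of_forall fun s => ?_),
    neg_nonpos.mpr (by positivity)⟩
  simp only [hE, Pi.add_apply, Pi.sub_apply, Function.comp_apply]
  ring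

/-- Energy decay for the extended Maxwell model (Theorem 3.1(ii)):
for a C¹ solution `(u, φ)` of the weak formulation, the energy `t ↦ E(u(t), φ(t))`
is differentiable on `(0, T)` with derivative `−η‖φ'(t)‖² ≤ 0`. -/
theorem stmt_5
    {X Ψ : Type*}
    [NormedAddCommGroup X] [InnerProductSpace ℝ X] [CompleteSpace X]
    [NormedAddCommGroup Ψ] [InnerProductSpace ℝ Ψ] [CompleteSpace Ψ]
    (V : Submodule ℝ X) (hV : IsClosed (V : Set X))
    (e : X →L[ℝ] Ψ) (C : Ψ →L[ℝ] Ψ)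
    (hCsym : ∀ φ ψ : Ψ, ⟪C φ, ψ⟫ = ⟪φ, C ψ⟫)
    (cstar : ℝ) (hcstar : 0 < cstar)
    (hCcoer : ∀ ψ : Ψ, cstar * ‖ψ‖ ^ 2 ≤ ⟪C ψ, ψ⟫)
    (c₀ : ℝ) (hc₀ : 0 < c₀)
    (hacoer : ∀ v ∈ V, c₀ * ‖v‖ ^ 2 ≤ ⟪C (e v), e v⟫)
    (ℓ : X →L[ℝ] ℝ) (g : X) (η α : ℝ) (hη : 0 < η) (hα : 0 ≤ α)
    (E : X → Ψ → ℝ)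
    (hE : ∀ u φ, E u φ =
      (1 / 2) * ⟪C (e u - φ), e u - φ⟫ + (α / 2) * ‖φ‖ ^ 2 - ℓ u)
    (T : ℝ) (hT : 0 < T)
    (u : ℝ → X) (φ : ℝ → Ψ) (u' : ℝ → X) (φ' : ℝ → Ψ)
    (hu_deriv : ∀ t ∈ Set.Icc (0 : ℝ) T, HasDerivAt u (u' t) t)
    (hφ_deriv : ∀ t ∈ Set.Icc (0 : ℝ) T, HasDerivAt φ (φ' t) t)
    (hu'_cont : ContinuousOn u' (Set.Icc (0 : ℝ) T))
    (hφ'_cont : ContinuousOn φ' (Set.Icc (0 : ℝ) T))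
    (hu_mem : ∀ t ∈ Set.Icc (0 : ℝ) T, u t - g ∈ V)
    (heq1 : ∀ t ∈ Set.Ioo (0 : ℝ) T, ∀ v ∈ V, ⟪C (e (u t) - φ t), e v⟫ = ℓ v)
    (heq2 : ∀ t ∈ Set.Ioo (0 : ℝ) T,
      η • φ' t + α • φ t - C (e (u t) - φ t) = 0) :
    ∀ t ∈ Set.Ioo (0 : ℝ) T,
      HasDerivAt (fun s : ℝ => E (u s) (φ s)) (-(η * ‖φ' t‖ ^ 2)) t ∧
      -(η * ‖φ' t‖ ^ 2) ≤ 0 :=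
  stmt_5_general V hV e C hCsym ℓ g η α hη E hE T u φ u' φ' hu_deriv hφ_deriv hu_mem heq1 heq2
end

section
/- Existence and uniqueness for the time-discrete extended Maxwell model (Theorem 4.1): let τ > 0, N ∈ ℕ, and for k = 0, …, N let ℓ^k ∈ X' and g^k ∈ X be given, and let φ⁰ ∈ Ψ. Then there exists a unique family (u^k, φ^k) ∈ (g^k + V) × Ψ, k = 0, …, N, such that φ⁰ is the given initial value and: (a) ⟪C(e u^k − φ^k), e v⟫_Ψ = ℓ^k(v) for all v ∈ V and all k = 0, …, N; (b) η(φ^k − φ^{k−1})/τ + α φ^k − C(e u^k − φ^k) = 0 in Ψ for all k = 1, …, N. -/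
/-! Each time step is a linear problem solved by Lax–Milgram. At `k = 0` the stress equation is
a coercive problem for `u⁰ ∈ g⁰ + V`. For `k ≥ 1`, with `γ = η / τ` and `β = γ + α`, the evolution
equation reads `(β + C) φᵏ = C (e uᵏ) + γ φᵏ⁻¹`, so `φᵏ` is an affine function of `uᵏ`.
Substituting it, the stress equation becomes a problem for `uᵏ` whose operator is the Schur
complement `C - C (β + C)⁻¹ C`; it is coercive because, for `φ = (β + C)⁻¹ C ψ`,
`⟪C ψ - C φ, ψ⟫ = ⟪C (ψ - φ), ψ - φ⟫ + β ‖φ‖²`. Induction over the time steps then gives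
existence and uniqueness of the whole family. -/

open scoped RealInnerProductSpace
open ContinuousLinearMap

theorem existsUnique_prod_of_iff {Y Z : Type*} {P : Y × Z → Prop} {Q : Y → Prop}
    (f : Y → Z) (hQ : ∃! y, Q y) (hP : ∀ p, P p ↔ Q p.1 ∧ p.2 = f p.1) : ∃! p, P p := by
  obtain ⟨y, hy, hy_unique⟩ := hQ
  refine ⟨(y, f y), (hP _).2 ⟨hy, rfl⟩, fun p hp => ?_⟩
  obtain ⟨hp₁, hp₂⟩ := (hP p).1 hp
  have h₁ : p.1 = y := hy_unique _ hp₁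
  exact Prod.ext h₁ (h₁ ▸ hp₂)

theorem exists_seq_unique_of_existsUnique_step {Y : Type*} {init : Y → Prop}
    {E : ℕ → Y → Prop} {R : Y → Y → Prop} (h₀ : ∃! y, init y ∧ E 0 y)
    (hstep : ∀ k y, ∃! z, E (k + 1) z ∧ R y z) (N : ℕ) :
    ∃ y : ℕ → Y,
      (init (y 0) ∧ (∀ k ≤ N, E k (y k)) ∧ ∀ k, 1 ≤ k → k ≤ N → R (y (k - 1)) (y k)) ∧
      ∀ y' : ℕ → Y, init (y' 0) → (∀ k ≤ N, E k (y' k)) →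
        (∀ k, 1 ≤ k → k ≤ N → R (y' (k - 1)) (y' k)) → ∀ k ≤ N, y' k = y k := by
  obtain ⟨y₀, ⟨hinit, hE₀⟩, hy₀_unique⟩ := h₀
  choose next hnext hnext_unique using hstep
  let y : ℕ → Y := fun n => Nat.rec y₀ next n
  refine ⟨y, ⟨hinit, fun k _ => ?_, fun k hk _ => ?_⟩, fun y' hinit' hE' hR' k hk => ?_⟩
  · cases k with
    | zero => exact hE₀
    | succ k => exact (hnext k (y k)).1
  · obtain ⟨k, rfl⟩ : ∃ j, k = j + 1 := ⟨k - 1, by omega⟩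
    exact (hnext k (y k)).2
  · induction k with
    | zero => exact hy₀_unique _ ⟨hinit', hE' 0 hk⟩
    | succ k ih =>
      have hR := hR' (k + 1) (by omega) hk
      rw [Nat.add_sub_cancel, ih (by omega)] at hR
      exact hnext_unique k (y k) _ ⟨hE' (k + 1) hk, hR⟩

section
variable {X : Type*} [NormedAddCommGroup X] [InnerProductSpace ℝ X] [CompleteSpace X]

theorem existsUnique_sub_mem_forall_eq_of_coercive {V : Submodule ℝ X}
    (hV : IsClosed (V : Set X)) (B : X →L[ℝ] X →L[ℝ] ℝ) {c : ℝ} (hc : 0 < c)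
    (hB : ∀ v ∈ V, c * ‖v‖ ^ 2 ≤ B v v) (F : X →L[ℝ] ℝ) (g : X) :
    ∃! u, u - g ∈ V ∧ ∀ v ∈ V, B u v = F v := by
  have : CompleteSpace V := hV.completeSpace_coe
  have hcoer : IsCoercive (B.bilinearComp V.subtypeL V.subtypeL) :=
    ⟨c, hc, fun w => by simpa [sq, mul_assoc] using hB w w.2⟩
  set f : V →L[ℝ] ℝ := (F - B g).comp V.subtypeL
  set w : V := hcoer.continuousLinearEquivOfBilin.symm ((InnerProductSpace.toDual ℝ V).symm f)
  have hw : ∀ v : V, B w v = F v - B g v := fun v => by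
    have h := hcoer.continuousLinearEquivOfBilin_apply w v
    rw [ContinuousLinearEquiv.apply_symm_apply, InnerProductSpace.toDual_symm_apply] at h
    exact h.symm
  refine ⟨g + w, ⟨by simp, fun v hv => by simp [hw ⟨v, hv⟩]⟩, fun u ⟨hu, hBu⟩ => ?_⟩
  have hd : u - (g + w) ∈ V := by simpa [sub_add_eq_sub_sub] using V.sub_mem hu w.2
  have hBd : B (u - (g + w)) (u - (g + w)) = 0 := by
    simp [hBu _ hd, hw ⟨_, hd⟩]
  have hsq : ‖u - (g + w)‖ ^ 2 ≤ 0 :=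
    le_of_mul_le_mul_left (by rw [mul_zero, ← hBd]; exact hB _ hd) hc
  exact sub_eq_zero.mp (norm_eq_zero.mp (sq_nonpos_iff _ |>.mp hsq))

theorem exists_continuousLinearEquiv_of_coercive (A : X →L[ℝ] X) {c : ℝ} (hc : 0 < c)
    (hA : ∀ x, c * ‖x‖ ^ 2 ≤ ⟪A x, x⟫) : ∃ T : X ≃L[ℝ] X, ∀ x, T x = A x := by
  have hcoer : IsCoercive ((innerSL ℝ).comp A) :=
    ⟨c, hc, fun x => by simpa [sq, mul_assoc] using hA x⟩
  exact ⟨hcoer.continuousLinearEquivOfBilin, fun x => ext_inner_right ℝ fun y => by simp⟩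

end

section
variable {X Ψ : Type*} [NormedAddCommGroup X] [InnerProductSpace ℝ X]
  [NormedAddCommGroup Ψ] [InnerProductSpace ℝ Ψ]

/-- `C - C R C`. For `R = (β + C)⁻¹` it is the Schur complement of the block operator
`[[C, -C], [-C, β + C]]` that a time step applies to `(e uᵏ, φᵏ)`. -/
def schurCompl (C R : Ψ →L[ℝ] Ψ) : Ψ →L[ℝ] Ψ :=
  C - C ∘L R ∘L C

theorem half_min_mul_norm_sq_le_inner_schurCompl {C : Ψ →L[ℝ] Ψ} {c β : ℝ} (hc : 0 ≤ c)
    (hβ : 0 ≤ β) (hC : ∀ ψ, c * ‖ψ‖ ^ 2 ≤ ⟪C ψ, ψ⟫) (T : Ψ ≃L[ℝ] Ψ)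
    (hT : ∀ φ, T φ = β • φ + C φ) (ψ : Ψ) :
    min c β / 2 * ‖ψ‖ ^ 2 ≤ ⟪schurCompl C (T.symm : Ψ →L[ℝ] Ψ) ψ, ψ⟫ := by
  set φ := T.symm (C ψ)
  have hφ : C (ψ - φ) = β • φ := by
    rw [map_sub, ← T.apply_symm_apply (C ψ), hT, add_sub_cancel_right]
  have hsplit : ‖ψ‖ ^ 2 ≤ 2 * (‖ψ - φ‖ ^ 2 + ‖φ‖ ^ 2) := by
    have := norm_add_le (ψ - φ) φ
    rw [sub_add_cancel] at this
    nlinarith [norm_nonneg ψ, sq_nonneg (‖ψ - φ‖ - ‖φ‖)]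
  calc min c β / 2 * ‖ψ‖ ^ 2 ≤ min c β * ‖ψ - φ‖ ^ 2 + min c β * ‖φ‖ ^ 2 := by
        nlinarith [le_min hc hβ]
    _ ≤ c * ‖ψ - φ‖ ^ 2 + β * ‖φ‖ ^ 2 := by
        gcongr
        exacts [min_le_left c β, min_le_right c β]
    _ ≤ ⟪C (ψ - φ), ψ - φ⟫ + β * ‖φ‖ ^ 2 := by grw [hC]
    _ = ⟪schurCompl C (T.symm : Ψ →L[ℝ] Ψ) ψ, ψ⟫ := by
        rw [← real_inner_self_eq_norm_sq, ← real_inner_smul_left, ← hφ, ← inner_add_right,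
          sub_add_cancel]
        simp [schurCompl, φ]

theorem exists_pos_mul_norm_sq_le_norm_sq_of_coercive {V : Submodule ℝ X} (e : X →L[ℝ] Ψ)
    (C : Ψ →L[ℝ] Ψ) {c₀ : ℝ} (hc₀ : 0 < c₀) (ha : ∀ v ∈ V, c₀ * ‖v‖ ^ 2 ≤ ⟪C (e v), e v⟫) :
    ∃ c > 0, ∀ v ∈ V, c * ‖v‖ ^ 2 ≤ ‖e v‖ ^ 2 := by
  refine ⟨c₀ / (‖C‖ + 1), by positivity, fun v hv => ?_⟩
  have hCe : ⟪C (e v), e v⟫ ≤ (‖C‖ + 1) * ‖e v‖ ^ 2 :=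
    calc ⟪C (e v), e v⟫ ≤ ‖C (e v)‖ * ‖e v‖ := real_inner_le_norm _ _
      _ ≤ ‖C‖ * ‖e v‖ * ‖e v‖ := by gcongr; exact C.le_opNorm _
      _ ≤ (‖C‖ + 1) * ‖e v‖ ^ 2 := by nlinarith [sq_nonneg ‖e v‖]
  rw [div_mul_eq_mul_div, div_le_iff₀ (by positivity), mul_comm _ (‖C‖ + 1)]
  exact (ha v hv).trans hCe

theorem backwardEuler_eq_zero_iff {C : Ψ →L[ℝ] Ψ} {γ α : ℝ} (T : Ψ ≃L[ℝ] Ψ)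
    (hT : ∀ φ, T φ = (γ + α) • φ + C φ) (ψ w φ : Ψ) :
    γ • (φ - ψ) + α • φ - C (w - φ) = 0 ↔ φ = T.symm (C w + γ • ψ) := by
  rw [T.eq_symm_apply, hT, ← sub_eq_zero (a := _ + _)]
  convert Iff.rfl using 2
  rw [map_sub]
  module

variable [CompleteSpace X] {V : Submodule ℝ X} {e : X →L[ℝ] Ψ} {C : Ψ →L[ℝ] Ψ}

theorem existsUnique_sub_mem_forall_inner_eq (hV : IsClosed (V : Set X)) (S : Ψ →L[ℝ] Ψ)
    {c : ℝ} (hc : 0 < c) (hS : ∀ v ∈ V, c * ‖v‖ ^ 2 ≤ ⟪S (e v), e v⟫) (χ : Ψ) (ℓ : X →L[ℝ] ℝ)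
    (g : X) : ∃! u, u - g ∈ V ∧ ∀ v ∈ V, ⟪S (e u) - χ, e v⟫ = ℓ v := by
  have h := existsUnique_sub_mem_forall_eq_of_coercive hV ((innerSL ℝ).bilinearComp (S ∘L e) e)
    hc hS (ℓ + (innerSL ℝ χ).comp e) g
  simpa only [bilinearComp_apply, comp_apply, add_apply, innerSL_apply_apply, inner_sub_left,
    sub_eq_iff_eq_add] using h

theorem existsUnique_initialStep (hV : IsClosed (V : Set X)) {c₀ : ℝ} (hc₀ : 0 < c₀)
    (ha : ∀ v ∈ V, c₀ * ‖v‖ ^ 2 ≤ ⟪C (e v), e v⟫) (ℓ : X →L[ℝ] ℝ) (g : X) (φ₀ : Ψ) :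
    ∃! p : X × Ψ, p.2 = φ₀ ∧ p.1 - g ∈ V ∧ ∀ v ∈ V, ⟪C (e p.1 - p.2), e v⟫ = ℓ v := by
  refine existsUnique_prod_of_iff (fun _ => φ₀)
    (existsUnique_sub_mem_forall_inner_eq hV C hc₀ ha (C φ₀) ℓ g) fun ⟨u, φ⟩ => ?_
  dsimp only
  constructor
  · rintro ⟨rfl, hu, hC⟩
    exact ⟨⟨hu, by simpa only [map_sub] using hC⟩, rfl⟩
  · rintro ⟨⟨hu, hC⟩, rfl⟩
    exact ⟨rfl, hu, by simpa only [map_sub] using hC⟩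

theorem existsUnique_timeStep [CompleteSpace Ψ] (hV : IsClosed (V : Set X)) {cstar : ℝ}
    (hcstar : 0 < cstar) (hC : ∀ ψ, cstar * ‖ψ‖ ^ 2 ≤ ⟪C ψ, ψ⟫) {c₀ : ℝ} (hc₀ : 0 < c₀)
    (ha : ∀ v ∈ V, c₀ * ‖v‖ ^ 2 ≤ ⟪C (e v), e v⟫) {γ α : ℝ} (hγ : 0 < γ) (hα : 0 ≤ α)
    (ℓ : X →L[ℝ] ℝ) (g : X) (ψ : Ψ) :
    ∃! p : X × Ψ, (p.1 - g ∈ V ∧ ∀ v ∈ V, ⟪C (e p.1 - p.2), e v⟫ = ℓ v) ∧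
      γ • (p.2 - ψ) + α • p.2 - C (e p.1 - p.2) = 0 := by
  have hβ : 0 < γ + α := by positivity
  obtain ⟨T, hT⟩ := exists_continuousLinearEquiv_of_coercive ((γ + α) • 1 + C) hβ fun φ => by
    simp only [add_apply, smul_apply, one_apply_eq_self, inner_add_left, real_inner_smul_left,
      real_inner_self_eq_norm_sq]
    nlinarith [hC φ, sq_nonneg ‖φ‖]
  obtain ⟨c, hc, he⟩ := exists_pos_mul_norm_sq_le_norm_sq_of_coercive e C hc₀ ha
  have hS : ∀ v ∈ V, min cstar (γ + α) / 2 * c * ‖v‖ ^ 2 ≤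
      ⟪schurCompl C (T.symm : Ψ →L[ℝ] Ψ) (e v), e v⟫ := fun v hv => by
    rw [mul_assoc]
    exact (mul_le_mul_of_nonneg_left (he v hv) (by positivity)).trans
      (half_min_mul_norm_sq_le_inner_schurCompl hcstar.le hβ.le hC T hT (e v))
  have hCφ : ∀ u, C (e u - T.symm (C (e u) + γ • ψ)) =
      schurCompl C (T.symm : Ψ →L[ℝ] Ψ) (e u) - γ • C (T.symm ψ) := fun u => by
    simp only [schurCompl, sub_apply, comp_apply, ContinuousLinearEquiv.coe_coe, map_sub,
      map_add, map_smul]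
    abel
  refine existsUnique_prod_of_iff (fun u => T.symm (C (e u) + γ • ψ))
    (existsUnique_sub_mem_forall_inner_eq hV _ (by positivity) hS (γ • C (T.symm ψ)) ℓ g)
    fun ⟨u, φ⟩ => ?_
  dsimp only
  rw [backwardEuler_eq_zero_iff T hT]
  constructor <;> rintro ⟨⟨hu, hCu⟩, rfl⟩ <;> exact ⟨⟨hu, by simpa only [hCφ] using hCu⟩, rfl⟩

end

theorem stmt_6_general
    {X Ψ : Type*}
    [NormedAddCommGroup X] [InnerProductSpace ℝ X] [CompleteSpace X]
    [NormedAddCommGroup Ψ] [InnerProductSpace ℝ Ψ] [CompleteSpace Ψ]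
    (V : Submodule ℝ X) (hV : IsClosed (V : Set X))
    (e : X →L[ℝ] Ψ) (C : Ψ →L[ℝ] Ψ)
    (cstar : ℝ) (hcstar : 0 < cstar)
    (hCcoer : ∀ ψ : Ψ, cstar * ‖ψ‖ ^ 2 ≤ ⟪C ψ, ψ⟫)
    (c₀ : ℝ) (hc₀ : 0 < c₀)
    (hacoer : ∀ v ∈ V, c₀ * ‖v‖ ^ 2 ≤ ⟪C (e v), e v⟫)
    (η α : ℝ) (hη : 0 < η) (hα : 0 ≤ α)
    (τ : ℝ) (hτ : 0 < τ) (N : ℕ)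
    (ℓ : ℕ → X →L[ℝ] ℝ) (g : ℕ → X) (φ0 : Ψ) :
    ∃ (u : ℕ → X) (φ : ℕ → Ψ),
      (φ 0 = φ0 ∧
       (∀ k ≤ N, u k - g k ∈ V) ∧
       (∀ k ≤ N, ∀ v ∈ V, ⟪C (e (u k) - φ k), e v⟫ = ℓ k v) ∧
       (∀ k, 1 ≤ k → k ≤ N →
         (η / τ) • (φ k - φ (k - 1)) + α • φ k - C (e (u k) - φ k) = 0)) ∧
      (∀ (u' : ℕ → X) (φ' : ℕ → Ψ),
        φ' 0 = φ0 →
        (∀ k ≤ N, u' k - g k ∈ V) →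
        (∀ k ≤ N, ∀ v ∈ V, ⟪C (e (u' k) - φ' k), e v⟫ = ℓ k v) →
        (∀ k, 1 ≤ k → k ≤ N →
          (η / τ) • (φ' k - φ' (k - 1)) + α • φ' k - C (e (u' k) - φ' k) = 0) →
        ∀ k ≤ N, u' k = u k ∧ φ' k = φ k) := by
  obtain ⟨y, ⟨hy₀, hE, hR⟩, hy_unique⟩ := exists_seq_unique_of_existsUnique_step
    (init := fun p : X × Ψ => p.2 = φ0)
    (E := fun k p => p.1 - g k ∈ V ∧ ∀ v ∈ V, ⟪C (e p.1 - p.2), e v⟫ = ℓ k v)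
    (R := fun p q => (η / τ) • (q.2 - p.2) + α • q.2 - C (e q.1 - q.2) = 0)
    (existsUnique_initialStep hV hc₀ hacoer (ℓ 0) (g 0) φ0)
    (fun k p => existsUnique_timeStep hV hcstar hCcoer hc₀ hacoer (div_pos hη hτ) hα
      (ℓ (k + 1)) (g (k + 1)) p.2) N
  refine ⟨fun k => (y k).1, fun k => (y k).2,
    ⟨hy₀, fun k hk => (hE k hk).1, fun k hk => (hE k hk).2, hR⟩,
    fun u' φ' hφ'₀ hu'V hu'ℓ hφ'step k hk => ?_⟩
  exact Prod.ext_iff.mp <| hy_unique (fun k => (u' k, φ' k)) hφ'₀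
    (fun k hk => ⟨hu'V k hk, hu'ℓ k hk⟩) hφ'step k hk

/-- Existence and uniqueness for the time-discrete extended Maxwell model
(Theorem 4.1): there is a unique family `(u^k, φ^k) ∈ (g^k + V) × Ψ`, `k = 0, …, N`,
with initial value `φ⁰`, satisfying the discrete weak formulation. -/
theorem stmt_6
    {X Ψ : Type*}
    [NormedAddCommGroup X] [InnerProductSpace ℝ X] [CompleteSpace X]
    [NormedAddCommGroup Ψ] [InnerProductSpace ℝ Ψ] [CompleteSpace Ψ]
    (V : Submodule ℝ X) (hV : IsClosed (V : Set X))
    (e : X →L[ℝ] Ψ) (C : Ψ →L[ℝ] Ψ)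
    (hCsym : ∀ φ ψ : Ψ, ⟪C φ, ψ⟫ = ⟪φ, C ψ⟫)
    (cstar : ℝ) (hcstar : 0 < cstar)
    (hCcoer : ∀ ψ : Ψ, cstar * ‖ψ‖ ^ 2 ≤ ⟪C ψ, ψ⟫)
    (c₀ : ℝ) (hc₀ : 0 < c₀)
    (hacoer : ∀ v ∈ V, c₀ * ‖v‖ ^ 2 ≤ ⟪C (e v), e v⟫)
    (η α : ℝ) (hη : 0 < η) (hα : 0 ≤ α)
    (τ : ℝ) (hτ : 0 < τ) (N : ℕ)
    (ℓ : ℕ → X →L[ℝ] ℝ) (g : ℕ → X) (φ0 : Ψ) :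
    ∃ (u : ℕ → X) (φ : ℕ → Ψ),
      (φ 0 = φ0 ∧
       (∀ k ≤ N, u k - g k ∈ V) ∧
       (∀ k ≤ N, ∀ v ∈ V, ⟪C (e (u k) - φ k), e v⟫ = ℓ k v) ∧
       (∀ k, 1 ≤ k → k ≤ N →
         (η / τ) • (φ k - φ (k - 1)) + α • φ k - C (e (u k) - φ k) = 0)) ∧
      (∀ (u' : ℕ → X) (φ' : ℕ → Ψ),
        φ' 0 = φ0 →
        (∀ k ≤ N, u' k - g k ∈ V) →
        (∀ k ≤ N, ∀ v ∈ V, ⟪C (e (u' k) - φ' k), e v⟫ = ℓ k v) →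
        (∀ k, 1 ≤ k → k ≤ N →
          (η / τ) • (φ' k - φ' (k - 1)) + α • φ' k - C (e (u' k) - φ' k) = 0) →
        ∀ k ≤ N, u' k = u k ∧ φ' k = φ k) :=
  stmt_6_general V hV e C cstar hcstar hCcoer c₀ hc₀ hacoer η α hη hα τ hτ N ℓ g φ0
end

section
/- The operator C(Id + D^{−1}C), where D := (η/τ + α)·Id + C, is a bounded self-adjoint operator on Ψ satisfying the coercivity estimate ⟪C(Id + D^{−1}C)ψ, ψ⟫_Ψ ≥ ⟪Cψ, ψ⟫_Ψ ≥ c_*‖ψ‖_Ψ² for all ψ ∈ Ψ; consequently the substituted elliptic problem ⟪C(Id + D^{−1}C)(e u), e v⟫_Ψ = ⟪(η/τ) C D^{−1} φ^{k−1}, e v⟫_Ψ + ℓ^k(v) for all v ∈ V has a unique solution u ∈ g^k + V. -/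
/-!
Since `D = (η/τ + α)·Id + C` is a positive operator, so is its inverse, and hence so is
`C D⁻¹ C = C D⁻¹ C†`. Thus `C(Id + D⁻¹C) = C + C D⁻¹ C` is self-adjoint and dominates `C`,
so the form `⟪C(Id + D⁻¹C)(e u), e v⟫` inherits the coercivity of `a` on `V`. Writing
`u = gᵏ + w` with `w ∈ V` turns the problem into a Lax–Milgram problem on the Hilbert space `V`.
-/

open scoped RealInnerProductSpace

namespace ContinuousLinearMap

theorem IsPositive.of_comp_eq_id {𝕜 E : Type*} [RCLike 𝕜] [NormedAddCommGroup E]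
    [InnerProductSpace 𝕜 E] {T S : E →L[𝕜] E} (hT : T.IsPositive) (h : T ∘L S = .id 𝕜 E) :
    S.IsPositive := by
  have hTS : ∀ x, T (S x) = x := fun x => congr($h x)
  refine ⟨fun x y => ?_, fun x => ?_⟩
  · calc inner 𝕜 (S x) y = inner 𝕜 (S x) (T (S y)) := by rw [hTS]
      _ = inner 𝕜 (T (S x)) (S y) := (hT.isSymmetric _ _).symm
      _ = inner 𝕜 x (S y) := by rw [hTS]
  · simpa only [reApplyInnerSelf, hTS] using hT.re_inner_nonneg_right (S x)

end ContinuousLinearMap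

section LaxMilgram

open ContinuousLinearMap

theorem IsCoercive.bijective {V : Type*} [NormedAddCommGroup V] [InnerProductSpace ℝ V]
    [CompleteSpace V] {B : V →L[ℝ] V →L[ℝ] ℝ} (hB : IsCoercive B) : Function.Bijective B := by
  have hB_eq : ⇑B = InnerProductSpace.toDual ℝ V ∘ hB.continuousLinearEquivOfBilin := by
    ext u v
    simp
  rw [hB_eq]
  exact (InnerProductSpace.toDual ℝ V).bijective.comp hB.continuousLinearEquivOfBilin.bijective

theorem existsUnique_sub_mem_forall_apply_eq {X : Type*} [NormedAddCommGroup X]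
    [InnerProductSpace ℝ X] (V : Submodule ℝ X) [CompleteSpace V] (B : X →L[ℝ] X →L[ℝ] ℝ)
    (hB : IsCoercive (B.bilinearComp V.subtypeL V.subtypeL)) (F : X →L[ℝ] ℝ) (g : X) :
    ∃! u : X, u - g ∈ V ∧ ∀ v ∈ V, B u v = F v := by
  obtain ⟨w, hw, hw_unique⟩ := hB.bijective.existsUnique ((F - B g) ∘L V.subtypeL)
  refine ⟨g + w, ⟨by simp, fun v hv => ?_⟩, fun u ⟨hu, huF⟩ => ?_⟩
  · have hwv : B w v = F v - B g v := congr($hw ⟨v, hv⟩)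
    rw [map_add, add_apply, hwv, add_sub_cancel]
  · have : (⟨u - g, hu⟩ : V) = w := hw_unique _ <| by
      ext v
      simp [huF v v.2]
    rw [← this, add_sub_cancel]

end LaxMilgram

open ContinuousLinearMap in
theorem stmt_8_general
    {X Ψ : Type*}
    [NormedAddCommGroup X] [InnerProductSpace ℝ X] [CompleteSpace X]
    [NormedAddCommGroup Ψ] [InnerProductSpace ℝ Ψ] [CompleteSpace Ψ]
    (V : Submodule ℝ X) (hV : IsClosed (V : Set X))
    (e : X →L[ℝ] Ψ) (C : Ψ →L[ℝ] Ψ)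
    (hCsym : ∀ φ ψ : Ψ, ⟪C φ, ψ⟫ = ⟪φ, C ψ⟫)
    (cstar : ℝ) (hcstar : 0 < cstar)
    (hCcoer : ∀ ψ : Ψ, cstar * ‖ψ‖ ^ 2 ≤ ⟪C ψ, ψ⟫)
    (c₀ : ℝ) (hc₀ : 0 < c₀)
    (hacoer : ∀ v ∈ V, c₀ * ‖v‖ ^ 2 ≤ ⟪C (e v), e v⟫)
    (η τ α : ℝ) (hη : 0 < η) (hτ : 0 < τ) (hα : 0 ≤ α)
    (φprev : Ψ) (ℓk : X →L[ℝ] ℝ) (gk : X)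
    (D : Ψ →L[ℝ] Ψ)
    (hD : D = (η / τ + α) • ContinuousLinearMap.id ℝ Ψ + C)
    (Dinv : Ψ →L[ℝ] Ψ)
    (hDinv₁ : D.comp Dinv = ContinuousLinearMap.id ℝ Ψ)
    (M : Ψ →L[ℝ] Ψ)
    (hM : M = C.comp (ContinuousLinearMap.id ℝ Ψ + Dinv.comp C)) :
    (∀ ψ χ : Ψ, ⟪M ψ, χ⟫ = ⟪ψ, M χ⟫) ∧
    (∀ ψ : Ψ, ⟪C ψ, ψ⟫ ≤ ⟪M ψ, ψ⟫ ∧ cstar * ‖ψ‖ ^ 2 ≤ ⟪C ψ, ψ⟫) ∧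
    (∃! u : X, u - gk ∈ V ∧
      ∀ v ∈ V, ⟪M (e u), e v⟫ = ⟪(η / τ) • C (Dinv φprev), e v⟫ + ℓk v) := by
  have hCpos : C.IsPositive :=
    (isPositive_iff C).2 ⟨hCsym, fun ψ => le_trans (by positivity) (hCcoer ψ)⟩
  have hDpos : D.IsPositive := hD ▸ (isPositive_id.smul_of_nonneg (by positivity)).add hCpos
  have hCDinvC : (C ∘L Dinv ∘L C).IsPositive := by
    simpa only [hCpos.isSelfAdjoint.adjoint_eq] using (hDpos.of_comp_eq_id hDinv₁).conj_adjoint C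
  have hM_eq : M = C + C ∘L Dinv ∘L C := by rw [hM, comp_add, comp_id]
  have hM_ge : ∀ ψ, ⟪C ψ, ψ⟫ ≤ ⟪M ψ, ψ⟫ := fun ψ => by
    rw [hM_eq, add_apply, inner_add_left]
    linarith [hCDinvC.inner_nonneg_left ψ]
  refine ⟨(hM_eq ▸ hCpos.add hCDinvC).isSymmetric, fun ψ => ⟨hM_ge ψ, hCcoer ψ⟩, ?_⟩
  have : CompleteSpace V := hV.completeSpace_coe
  refine existsUnique_sub_mem_forall_apply_eq V ((innerSL ℝ).bilinearComp (M ∘L e) e)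
    ⟨c₀, hc₀, fun v => ?_⟩ (innerSL ℝ ((η / τ) • C (Dinv φprev)) ∘L e + ℓk) gk
  calc c₀ * ‖v‖ * ‖v‖ = c₀ * ‖(v : X)‖ ^ 2 := by rw [Submodule.norm_coe]; ring
    _ ≤ ⟪C (e v), e v⟫ := hacoer v v.2
    _ ≤ ⟪M (e v), e v⟫ := hM_ge _

/-- The operator `C(Id + D⁻¹C)`, with `D := (η/τ + α)·Id + C`, is bounded
self-adjoint and coercive: `⟪C(Id + D⁻¹C)ψ, ψ⟫ ≥ ⟪Cψ, ψ⟫ ≥ c_*‖ψ‖²`; consequently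
the substituted elliptic problem has a unique solution `u ∈ gᵏ + V`. -/
theorem stmt_8
    {X Ψ : Type*}
    [NormedAddCommGroup X] [InnerProductSpace ℝ X] [CompleteSpace X]
    [NormedAddCommGroup Ψ] [InnerProductSpace ℝ Ψ] [CompleteSpace Ψ]
    (V : Submodule ℝ X) (hV : IsClosed (V : Set X))
    (e : X →L[ℝ] Ψ) (C : Ψ →L[ℝ] Ψ)
    (hCsym : ∀ φ ψ : Ψ, ⟪C φ, ψ⟫ = ⟪φ, C ψ⟫)
    (cstar : ℝ) (hcstar : 0 < cstar)
    (hCcoer : ∀ ψ : Ψ, cstar * ‖ψ‖ ^ 2 ≤ ⟪C ψ, ψ⟫)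
    (c₀ : ℝ) (hc₀ : 0 < c₀)
    (hacoer : ∀ v ∈ V, c₀ * ‖v‖ ^ 2 ≤ ⟪C (e v), e v⟫)
    (η τ α : ℝ) (hη : 0 < η) (hτ : 0 < τ) (hα : 0 ≤ α)
    (φprev : Ψ) (ℓk : X →L[ℝ] ℝ) (gk : X)
    (D : Ψ →L[ℝ] Ψ)
    (hD : D = (η / τ + α) • ContinuousLinearMap.id ℝ Ψ + C)
    (Dinv : Ψ →L[ℝ] Ψ)
    (hDinv₁ : D.comp Dinv = ContinuousLinearMap.id ℝ Ψ)
    (hDinv₂ : Dinv.comp D = ContinuousLinearMap.id ℝ Ψ)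
    (M : Ψ →L[ℝ] Ψ)
    (hM : M = C.comp (ContinuousLinearMap.id ℝ Ψ + Dinv.comp C)) :
    (∀ ψ χ : Ψ, ⟪M ψ, χ⟫ = ⟪ψ, M χ⟫) ∧
    (∀ ψ : Ψ, ⟪C ψ, ψ⟫ ≤ ⟪M ψ, ψ⟫ ∧ cstar * ‖ψ‖ ^ 2 ≤ ⟪C ψ, ψ⟫) ∧
    (∃! u : X, u - gk ∈ V ∧
      ∀ v ∈ V, ⟪M (e u), e v⟫ = ⟪(η / τ) • C (Dinv φprev), e v⟫ + ℓk v) :=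
  stmt_8_general V hV e C hCsym cstar hcstar hCcoer c₀ hc₀ hacoer η τ α hη hτ hα φprev ℓk gk D hD
    Dinv hDinv₁ M hM
end

section
/- Gradient flow structure for the time-discrete model (Theorem 4.2(i)): assume the data are time-independent (ℓ^k = ℓ and g^k = g for all k), and let (u^k, φ^k) ∈ (g + V) × Ψ, k = 0, …, N, be the solution of the time-discrete model with initial value φ⁰. Then for every k = 1, …, N and every ψ ∈ Ψ, η⟪(φ^k − φ^{k−1})/τ, ψ⟫_Ψ = −(∂E_*)(φ^k)[ψ]. -/
open scoped RealInnerProductSpace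

/-- Gradient flow structure for the time-discrete model (Theorem 4.2(i)):
for time-independent data, the solution of the time-discrete model satisfies
`η⟪(φᵏ − φᵏ⁻¹)/τ, ψ⟫ = −(∂E_*)(φᵏ)[ψ]` for all `k = 1, …, N` and `ψ ∈ Ψ`. -/
theorem stmt_9
    {X Ψ : Type*}
    [NormedAddCommGroup X] [InnerProductSpace ℝ X] [CompleteSpace X]
    [NormedAddCommGroup Ψ] [InnerProductSpace ℝ Ψ] [CompleteSpace Ψ]
    (V : Submodule ℝ X) (hV : IsClosed (V : Set X))
    (e : X →L[ℝ] Ψ) (C : Ψ →L[ℝ] Ψ)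
    (hCsym : ∀ φ ψ : Ψ, ⟪C φ, ψ⟫ = ⟪φ, C ψ⟫)
    (cstar : ℝ) (hcstar : 0 < cstar)
    (hCcoer : ∀ ψ : Ψ, cstar * ‖ψ‖ ^ 2 ≤ ⟪C ψ, ψ⟫)
    (c₀ : ℝ) (hc₀ : 0 < c₀)
    (hacoer : ∀ v ∈ V, c₀ * ‖v‖ ^ 2 ≤ ⟪C (e v), e v⟫)
    (ℓ : X →L[ℝ] ℝ) (g : X) (η α : ℝ) (hη : 0 < η) (hα : 0 ≤ α)
    (τ : ℝ) (hτ : 0 < τ) (N : ℕ)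
    (E : X → Ψ → ℝ)
    (hE : ∀ u φ, E u φ =
      (1 / 2) * ⟪C (e u - φ), e u - φ⟫ + (α / 2) * ‖φ‖ ^ 2 - ℓ u)
    (ubar : Ψ → X)
    (hubar_mem : ∀ φ : Ψ, ubar φ - g ∈ V)
    (hubar_weak : ∀ φ : Ψ, ∀ v ∈ V, ⟪C (e (ubar φ) - φ), e v⟫ = ℓ v)
    (hubar_min : ∀ φ : Ψ, ∀ v : X, v - g ∈ V → E (ubar φ) φ ≤ E v φ)
    (Estar : Ψ → ℝ)
    (hEstar : ∀ φ : Ψ, Estar φ = E (ubar φ) φ)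
    (u : ℕ → X) (φ : ℕ → Ψ) (φ0 : Ψ)
    (hφ0 : φ 0 = φ0)
    (hmem : ∀ k ≤ N, u k - g ∈ V)
    (heq1 : ∀ k ≤ N, ∀ v ∈ V, ⟪C (e (u k) - φ k), e v⟫ = ℓ v)
    (heq2 : ∀ k, 1 ≤ k → k ≤ N →
      (η / τ) • (φ k - φ (k - 1)) + α • φ k - C (e (u k) - φ k) = 0) :
    ∀ k, 1 ≤ k → k ≤ N → ∀ ψ : Ψ,
      HasDerivAt (fun ε : ℝ => Estar (φ k + ε • ψ))
        (-(η * ⟪τ⁻¹ • (φ k - φ (k - 1)), ψ⟫)) 0 := by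
  intro k hk1 hkN ψ
  -- uniqueness of the weak solution in g + V
  have huniq : ∀ (φ' : Ψ) (u₁ u₂ : X), u₁ - g ∈ V → u₂ - g ∈ V →
      (∀ v ∈ V, ⟪C (e u₁ - φ'), e v⟫ = ℓ v) →
      (∀ v ∈ V, ⟪C (e u₂ - φ'), e v⟫ = ℓ v) → u₁ = u₂ := by
    intro φ' u₁ u₂ hm₁ hm₂ hw₁ hw₂
    have hv : u₁ - u₂ ∈ V := by
      rw [show u₁ - u₂ = (u₁ - g) - (u₂ - g) by abel]
      exact V.sub_mem hm₁ hm₂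
    have h1 := hw₁ _ hv
    have h2 := hw₂ _ hv
    have hdiff : ⟪C (e (u₁ - u₂)), e (u₁ - u₂)⟫ = 0 := by
      have harg : e u₁ - φ' - (e u₂ - φ') = e (u₁ - u₂) := by
        rw [map_sub]; abel
      calc ⟪C (e (u₁ - u₂)), e (u₁ - u₂)⟫
          = ⟪C (e u₁ - φ'), e (u₁ - u₂)⟫ - ⟪C (e u₂ - φ'), e (u₁ - u₂)⟫ := by
            rw [← harg, map_sub, inner_sub_left]
        _ = 0 := by rw [h1, h2]; ring
    have hcoer := hacoer _ hv
    rw [hdiff] at hcoer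
    have : ‖u₁ - u₂‖ ^ 2 ≤ 0 := by nlinarith
    have : u₁ - u₂ = 0 := by
      have := sq_nonneg ‖u₁ - u₂‖
      have hn : ‖u₁ - u₂‖ ^ 2 = 0 := le_antisymm ‹_› ‹_›
      have : ‖u₁ - u₂‖ = 0 := by nlinarith
      exact norm_eq_zero.mp this
    exact sub_eq_zero.mp this
  set w₁ : X := ubar (φ k + ψ) - ubar (φ k) with hw₁def
  have hw₁V : w₁ ∈ V := by
    have := V.sub_mem (hubar_mem (φ k + ψ)) (hubar_mem (φ k))
    simpa [hw₁def] using this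
  -- the "correction" b := e w₁ - ψ is C-orthogonal to e V
  have hbzero : ∀ v ∈ V, ⟪C (e w₁ - ψ), e v⟫ = 0 := by
    intro v hv
    have h1 := hubar_weak (φ k + ψ) v hv
    have h2 := hubar_weak (φ k) v hv
    have harg : e (ubar (φ k + ψ)) - (φ k + ψ)
        = (e (ubar (φ k)) - φ k) + (e w₁ - ψ) := by
      rw [hw₁def, map_sub]; abel
    rw [harg, map_add, inner_add_left, h2] at h1
    linarith
  -- linearity of ubar along the segment
  have hident : ∀ ε : ℝ, ubar (φ k + ε • ψ) = ubar (φ k) + ε • w₁ := by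
    intro ε
    apply huniq (φ k + ε • ψ)
    · exact hubar_mem _
    · have : (ubar (φ k) - g) + ε • w₁ ∈ V :=
        V.add_mem (hubar_mem _) (V.smul_mem _ hw₁V)
      simpa [add_sub_right_comm] using this
    · exact hubar_weak _
    · intro v hv
      have harg : e (ubar (φ k) + ε • w₁) - (φ k + ε • ψ)
          = (e (ubar (φ k)) - φ k) + ε • (e w₁ - ψ) := by
        rw [map_add, map_smul, smul_sub]; abel
      rw [harg, map_add, inner_add_left, map_smul, real_inner_smul_left,
        hbzero v hv, hubar_weak (φ k) v hv]
      ring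
  have hu0 : ubar (φ k) = u k :=
    huniq (φ k) _ _ (hubar_mem _) (hmem k hkN) (hubar_weak _) (heq1 k hkN)
  set a : Ψ := e (ubar (φ k)) - φ k with hadef
  set b : Ψ := e w₁ - ψ with hbdef
  set c1 : ℝ := ⟪C a, b⟫ + α * ⟪φ k, ψ⟫ - ℓ w₁ with hc1def
  set c2 : ℝ := (1 / 2) * ⟪C b, b⟫ + (α / 2) * ‖ψ‖ ^ 2 with hc2def
  have key : ∀ ε : ℝ, Estar (φ k + ε • ψ) = Estar (φ k) + ε * c1 + ε ^ 2 * c2 := by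
    intro ε
    rw [hEstar, hEstar, hident ε, hE, hE]
    have harg : e (ubar (φ k) + ε • w₁) - (φ k + ε • ψ) = a + ε • b := by
      rw [hadef, hbdef, map_add, map_smul, smul_sub]; abel
    rw [harg]
    have hCexp : ⟪C (a + ε • b), a + ε • b⟫
        = ⟪C a, a⟫ + 2 * ε * ⟪C a, b⟫ + ε ^ 2 * ⟪C b, b⟫ := by
      rw [map_add, map_smul, inner_add_left, inner_add_right, inner_add_right,
        real_inner_smul_left, real_inner_smul_left, real_inner_smul_right,
        real_inner_smul_right, hCsym b a, real_inner_comm b (C a)]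
      ring
    have hnorm : ‖φ k + ε • ψ‖ ^ 2
        = ‖φ k‖ ^ 2 + 2 * ε * ⟪φ k, ψ⟫ + ε ^ 2 * ‖ψ‖ ^ 2 := by
      rw [norm_add_sq_real, real_inner_smul_right, norm_smul]
      simp [mul_pow, sq_abs]
      ring
    have hell : ℓ (ubar (φ k) + ε • w₁) = ℓ (ubar (φ k)) + ε * ℓ w₁ := by
      simp
    rw [hCexp, hnorm, hell, hc1def, hc2def]
    ring
  have hfun : (fun ε : ℝ => Estar (φ k + ε • ψ))
      = fun ε : ℝ => Estar (φ k) + ε * c1 + ε ^ 2 * c2 := funext key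
  rw [hfun]
  have hc1 : c1 = -(η * ⟪τ⁻¹ • (φ k - φ (k - 1)), ψ⟫) := by
    have hCa : C (e (u k) - φ k) = (η / τ) • (φ k - φ (k - 1)) + α • φ k :=
      (sub_eq_zero.mp (heq2 k hk1 hkN)).symm
    have hCab : ⟪C a, b⟫ = ℓ w₁ - ⟪C a, ψ⟫ := by
      rw [hbdef, inner_sub_right, hadef, hubar_weak (φ k) w₁ hw₁V]
    have hCaψ : ⟪C a, ψ⟫ = (η / τ) * ⟪φ k - φ (k - 1), ψ⟫ + α * ⟪φ k, ψ⟫ := by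
      rw [hadef, hu0, hCa, inner_add_left, real_inner_smul_left, real_inner_smul_left]
    rw [hc1def, hCab, hCaψ, real_inner_smul_left]
    field_simp
    ring
  rw [← hc1]
  have h1 : HasDerivAt (fun ε : ℝ => ε * c1) c1 0 := by
    simpa using (hasDerivAt_id (0 : ℝ)).mul_const c1
  have h2 : HasDerivAt (fun ε : ℝ => ε ^ 2 * c2) 0 0 := by
    simpa using (hasDerivAt_pow 2 (0 : ℝ)).mul_const c2
  have h3 := ((hasDerivAt_const (0 : ℝ) (Estar (φ k))).add h1).add h2
  rw [zero_add, add_zero] at h3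
  exact h3
end

section
/- Discrete energy decay identity (Theorem 4.2(ii)): assume the data are time-independent (ℓ^k = ℓ, g^k = g), let (u^k, φ^k) ∈ (g + V) × Ψ, k = 0, …, N, be the solution of the time-discrete model, and set E^k := E(u^k, φ^k), D̄_τ ρ^k := (ρ^k − ρ^{k−1})/τ. Then for every k = 1, …, N: D̄_τ E^k + (ατ/2)‖D̄_τ φ^k‖_Ψ² + (τ/2)⟪C(D̄_τ(e u^k − φ^k)), D̄_τ(e u^k − φ^k)⟫_Ψ = −η‖D̄_τ φ^k‖_Ψ² ≤ 0. -/
/-!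
Test the equilibrium equation at step `k` with `uᵏ - uᵏ⁻¹ ∈ V` and substitute the flow rule for
`C(e uᵏ - φᵏ)`. The quadratic parts of the energy difference are then handled by the discrete chain
rule `2⟪T a, a - b⟫ = ⟪T a, a⟫ - ⟪T b, b⟫ + ⟪T (a - b), a - b⟫` for symmetric `T` (applied to `C`
and to the identity), and the loading terms cancel, leaving
`Eᵏ - Eᵏ⁻¹ = -½⟪C δ, δ⟫ - (α/2)‖φᵏ - φᵏ⁻¹‖² - (η/τ)‖φᵏ - φᵏ⁻¹‖²` with `δ` the increment of `e u - φ`.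
Dividing by `τ` gives the identity.
-/

open scoped RealInnerProductSpace

namespace LinearMap.IsSymmetric

variable {E : Type*} [NormedAddCommGroup E] [InnerProductSpace ℝ E] {T : E →ₗ[ℝ] E}

theorem two_mul_inner_map_sub (hT : T.IsSymmetric) (x y : E) :
    2 * ⟪T x, x - y⟫ = ⟪T x, x⟫ - ⟪T y, y⟫ + ⟪T (x - y), x - y⟫ := by
  have hyx : ⟪T y, x⟫ = ⟪T x, y⟫ := by rw [hT, real_inner_comm]
  rw [map_sub, inner_sub_left, inner_sub_right, inner_sub_right, hyx]
  ring

end LinearMap.IsSymmetric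

theorem two_mul_inner_sub {E : Type*} [NormedAddCommGroup E] [InnerProductSpace ℝ E] (x y : E) :
    2 * ⟪x, x - y⟫ = ‖x‖ ^ 2 - ‖y‖ ^ 2 + ‖x - y‖ ^ 2 := by
  simpa only [LinearMap.id_apply, real_inner_self_eq_norm_sq] using
    LinearMap.IsSymmetric.id.two_mul_inner_map_sub x y

section Energy

variable {X Ψ : Type*} [NormedAddCommGroup X] [InnerProductSpace ℝ X]
  [NormedAddCommGroup Ψ] [InnerProductSpace ℝ Ψ]

noncomputable def energy (C : Ψ →L[ℝ] Ψ) (e : X →L[ℝ] Ψ) (ℓ : X →L[ℝ] ℝ) (α : ℝ)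
    (u : X) (φ : Ψ) : ℝ :=
  (1 / 2) * ⟪C (e u - φ), e u - φ⟫ + (α / 2) * ‖φ‖ ^ 2 - ℓ u

theorem energy_sub_energy_of_step {C : Ψ →L[ℝ] Ψ} (hC : (C : Ψ →ₗ[ℝ] Ψ).IsSymmetric)
    {e : X →L[ℝ] Ψ} {ℓ : X →L[ℝ] ℝ} {α β : ℝ} {u u' : X} {φ φ' : Ψ}
    (hbal : ⟪C (e u - φ), e (u - u')⟫ = ℓ (u - u'))
    (hflow : C (e u - φ) = β • (φ - φ') + α • φ) :
    energy C e ℓ α u φ - energy C e ℓ α u' φ' =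
      -(1 / 2) * ⟪C ((e u - φ) - (e u' - φ')), (e u - φ) - (e u' - φ')⟫
        - (α / 2) * ‖φ - φ'‖ ^ 2 - β * ‖φ - φ'‖ ^ 2 := by
  set w := e u - φ
  set w' := e u' - φ'
  have hsplit : e (u - u') = (w - w') + (φ - φ') := by
    simp only [w, w', map_sub]; abel
  have hflow' : ⟪C w, φ - φ'⟫ = β * ‖φ - φ'‖ ^ 2 + α * ⟪φ, φ - φ'⟫ := by
    rw [hflow, inner_add_left, real_inner_smul_left, real_inner_smul_left,
      real_inner_self_eq_norm_sq]
  rw [hsplit, inner_add_right, hflow', map_sub ℓ] at hbal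
  have hw := hC.two_mul_inner_map_sub w w'
  simp only [ContinuousLinearMap.coe_coe] at hw
  unfold energy
  linear_combination (-1 / 2 : ℝ) * hw - (α / 2) * two_mul_inner_sub φ φ' + hbal

end Energy

theorem inner_map_smul_smul {E : Type*} [NormedAddCommGroup E] [InnerProductSpace ℝ E]
    (T : E →L[ℝ] E) (c : ℝ) (x : E) : ⟪T (c • x), c • x⟫ = c ^ 2 * ⟪T x, x⟫ := by
  rw [map_smul, real_inner_smul_left, real_inner_smul_right]
  ring

theorem stmt_10_general
    {X Ψ : Type*}
    [NormedAddCommGroup X] [InnerProductSpace ℝ X]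
    [NormedAddCommGroup Ψ] [InnerProductSpace ℝ Ψ]
    (V : Submodule ℝ X)
    (e : X →L[ℝ] Ψ) (C : Ψ →L[ℝ] Ψ)
    (hCsym : ∀ φ ψ : Ψ, ⟪C φ, ψ⟫ = ⟪φ, C ψ⟫)
    (ℓ : X →L[ℝ] ℝ) (g : X) (η α : ℝ) (hη : 0 < η)
    (τ : ℝ) (hτ : 0 < τ) (N : ℕ)
    (E : X → Ψ → ℝ)
    (hE : ∀ u φ, E u φ =
      (1 / 2) * ⟪C (e u - φ), e u - φ⟫ + (α / 2) * ‖φ‖ ^ 2 - ℓ u)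
    (u : ℕ → X) (φ : ℕ → Ψ)
    (hmem : ∀ k ≤ N, u k - g ∈ V)
    (heq1 : ∀ k ≤ N, ∀ v ∈ V, ⟪C (e (u k) - φ k), e v⟫ = ℓ v)
    (heq2 : ∀ k, 1 ≤ k → k ≤ N →
      (η / τ) • (φ k - φ (k - 1)) + α • φ k - C (e (u k) - φ k) = 0) :
    ∀ k, 1 ≤ k → k ≤ N →
      (E (u k) (φ k) - E (u (k - 1)) (φ (k - 1))) / τ
        + (α * τ / 2) * ‖τ⁻¹ • (φ k - φ (k - 1))‖ ^ 2
        + (τ / 2) * ⟪C (τ⁻¹ • ((e (u k) - φ k) - (e (u (k - 1)) - φ (k - 1)))),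
            τ⁻¹ • ((e (u k) - φ k) - (e (u (k - 1)) - φ (k - 1)))⟫
        = -(η * ‖τ⁻¹ • (φ k - φ (k - 1))‖ ^ 2) ∧
      -(η * ‖τ⁻¹ • (φ k - φ (k - 1))‖ ^ 2) ≤ 0 := by
  intro k hk1 hkN
  have hincr : u k - u (k - 1) ∈ V := by
    simpa using V.sub_mem (hmem k hkN) (hmem (k - 1) (by omega))
  have hstep := energy_sub_energy_of_step (β := η / τ) (fun x y ↦ hCsym x y)
    (heq1 k hkN _ hincr) (sub_eq_zero.mp (heq2 k hk1 hkN)).symm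
  have hEeq : E = energy C e ℓ α := funext₂ hE
  refine ⟨?_, neg_nonpos.mpr (by positivity)⟩
  rw [hEeq, hstep, inner_map_smul_smul, norm_smul, mul_pow, Real.norm_eq_abs, sq_abs]
  field_simp
  ring

/-- Discrete energy decay identity (Theorem 4.2(ii)): for the solution of the
time-discrete model with time-independent data,
`D̄_τ Eᵏ + (ατ/2)‖D̄_τ φᵏ‖² + (τ/2)⟪C D̄_τ(e uᵏ − φᵏ), D̄_τ(e uᵏ − φᵏ)⟫ = −η‖D̄_τ φᵏ‖² ≤ 0`. -/
theorem stmt_10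
    {X Ψ : Type*}
    [NormedAddCommGroup X] [InnerProductSpace ℝ X] [CompleteSpace X]
    [NormedAddCommGroup Ψ] [InnerProductSpace ℝ Ψ] [CompleteSpace Ψ]
    (V : Submodule ℝ X) (hV : IsClosed (V : Set X))
    (e : X →L[ℝ] Ψ) (C : Ψ →L[ℝ] Ψ)
    (hCsym : ∀ φ ψ : Ψ, ⟪C φ, ψ⟫ = ⟪φ, C ψ⟫)
    (cstar : ℝ) (hcstar : 0 < cstar)
    (hCcoer : ∀ ψ : Ψ, cstar * ‖ψ‖ ^ 2 ≤ ⟪C ψ, ψ⟫)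
    (c₀ : ℝ) (hc₀ : 0 < c₀)
    (hacoer : ∀ v ∈ V, c₀ * ‖v‖ ^ 2 ≤ ⟪C (e v), e v⟫)
    (ℓ : X →L[ℝ] ℝ) (g : X) (η α : ℝ) (hη : 0 < η) (hα : 0 ≤ α)
    (τ : ℝ) (hτ : 0 < τ) (N : ℕ)
    (E : X → Ψ → ℝ)
    (hE : ∀ u φ, E u φ =
      (1 / 2) * ⟪C (e u - φ), e u - φ⟫ + (α / 2) * ‖φ‖ ^ 2 - ℓ u)
    (u : ℕ → X) (φ : ℕ → Ψ)
    (hmem : ∀ k ≤ N, u k - g ∈ V)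
    (heq1 : ∀ k ≤ N, ∀ v ∈ V, ⟪C (e (u k) - φ k), e v⟫ = ℓ v)
    (heq2 : ∀ k, 1 ≤ k → k ≤ N →
      (η / τ) • (φ k - φ (k - 1)) + α • φ k - C (e (u k) - φ k) = 0) :
    ∀ k, 1 ≤ k → k ≤ N →
      (E (u k) (φ k) - E (u (k - 1)) (φ (k - 1))) / τ
        + (α * τ / 2) * ‖τ⁻¹ • (φ k - φ (k - 1))‖ ^ 2
        + (τ / 2) * ⟪C (τ⁻¹ • ((e (u k) - φ k) - (e (u (k - 1)) - φ (k - 1)))),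
            τ⁻¹ • ((e (u k) - φ k) - (e (u (k - 1)) - φ (k - 1)))⟫
        = -(η * ‖τ⁻¹ • (φ k - φ (k - 1))‖ ^ 2) ∧
      -(η * ‖τ⁻¹ • (φ k - φ (k - 1))‖ ^ 2) ≤ 0 :=
  stmt_10_general V e C hCsym ℓ g η α hη τ hτ N E hE u φ hmem heq1 heq2
end

section
/- Energy decay for the time-discrete model (Corollary 4.1): assume the data are time-independent (ℓ^k = ℓ, g^k = g), and let (u^k, φ^k) ∈ (g + V) × Ψ, k = 0, …, N, be the solution of the time-discrete model. Then the discrete energies E^k := E(u^k, φ^k) are monotone nonincreasing: E^k ≤ E^{k−1} for all k = 1, …, N. -/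
/-!
The energy `E(u, φ)` is a convex quadratic, so `E^{k-1}` dominates its linearisation at
`(u^k, φ^k)`. In the `u`-direction the linear term vanishes by the equilibrium equation, since
`u^{k-1} - u^k ∈ V`; in the `φ`-direction the implicit Euler step makes its gradient
`α φ^k - C(e u^k - φ^k)` equal to `(η/τ)(φ^{k-1} - φ^k)`, whose pairing with `φ^{k-1} - φ^k` is
`(η/τ)‖φ^k - φ^{k-1}‖² ≥ 0`.
-/

open scoped RealInnerProductSpace

section Convexity

variable {E : Type*} [NormedAddCommGroup E] [InnerProductSpace ℝ E]

theorem ContinuousLinearMap.IsPositive.inner_map_self_add_two_inner_le {T : E →L[ℝ] E}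
    (hT : T.IsPositive) (x y : E) : ⟪T y, y⟫ + 2 * ⟪T y, x - y⟫ ≤ ⟪T x, x⟫ := by
  have hsymm : ⟪T x, y⟫ = ⟪T y, x⟫ := (hT.isSymmetric x y).trans (real_inner_comm _ _)
  have := hT.inner_nonneg_left (x - y)
  simp only [map_sub, inner_sub_left, inner_sub_right] at this ⊢
  linarith

theorem norm_sq_add_two_inner_le (x y : E) : ‖y‖ ^ 2 + 2 * ⟪y, x - y⟫ ≤ ‖x‖ ^ 2 := by
  have h := norm_add_sq_real y (x - y)
  rw [add_sub_cancel] at h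
  linarith [sq_nonneg ‖x - y‖]

end Convexity

section Energy

variable {X Ψ : Type*} [NormedAddCommGroup X] [InnerProductSpace ℝ X]
  [NormedAddCommGroup Ψ] [InnerProductSpace ℝ Ψ]

noncomputable def energyFunctional (e : X →L[ℝ] Ψ) (C : Ψ →L[ℝ] Ψ) (ℓ : X →L[ℝ] ℝ) (α : ℝ)
    (u : X) (φ : Ψ) : ℝ :=
  (1 / 2) * ⟪C (e u - φ), e u - φ⟫ + (α / 2) * ‖φ‖ ^ 2 - ℓ u

theorem energyFunctional_add_inner_le (e : X →L[ℝ] Ψ) {C : Ψ →L[ℝ] Ψ} (hC : C.IsPositive)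
    (ℓ : X →L[ℝ] ℝ) {α : ℝ} (hα : 0 ≤ α) (u u' : X) (φ φ' : Ψ) :
    energyFunctional e C ℓ α u φ + (⟪C (e u - φ), e (u' - u)⟫ - ℓ (u' - u))
        + ⟪α • φ - C (e u - φ), φ' - φ⟫ ≤ energyFunctional e C ℓ α u' φ' := by
  have hquad := hC.inner_map_self_add_two_inner_le (e u' - φ') (e u - φ)
  have hnorm := mul_le_mul_of_nonneg_left (norm_sq_add_two_inner_le φ' φ) hα
  have hdiff : e u' - φ' - (e u - φ) = e (u' - u) - (φ' - φ) := by rw [map_sub]; abel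
  rw [hdiff, inner_sub_right _ (e (u' - u))] at hquad
  rw [inner_sub_left, real_inner_smul_left, map_sub ℓ, energyFunctional, energyFunctional]
  linarith

end Energy

theorem stmt_11_general
    {X Ψ : Type*}
    [NormedAddCommGroup X] [InnerProductSpace ℝ X]
    [NormedAddCommGroup Ψ] [InnerProductSpace ℝ Ψ]
    (V : Submodule ℝ X)
    (e : X →L[ℝ] Ψ) (C : Ψ →L[ℝ] Ψ)
    (hCsym : ∀ φ ψ : Ψ, ⟪C φ, ψ⟫ = ⟪φ, C ψ⟫)
    (cstar : ℝ) (hcstar : 0 < cstar)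
    (hCcoer : ∀ ψ : Ψ, cstar * ‖ψ‖ ^ 2 ≤ ⟪C ψ, ψ⟫)
    (ℓ : X →L[ℝ] ℝ) (g : X) (η α : ℝ) (hη : 0 < η) (hα : 0 ≤ α)
    (τ : ℝ) (hτ : 0 < τ) (N : ℕ)
    (E : X → Ψ → ℝ)
    (hE : ∀ u φ, E u φ =
      (1 / 2) * ⟪C (e u - φ), e u - φ⟫ + (α / 2) * ‖φ‖ ^ 2 - ℓ u)
    (u : ℕ → X) (φ : ℕ → Ψ)
    (hmem : ∀ k ≤ N, u k - g ∈ V)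
    (heq1 : ∀ k ≤ N, ∀ v ∈ V, ⟪C (e (u k) - φ k), e v⟫ = ℓ v)
    (heq2 : ∀ k, 1 ≤ k → k ≤ N →
      (η / τ) • (φ k - φ (k - 1)) + α • φ k - C (e (u k) - φ k) = 0) :
    ∀ k, 1 ≤ k → k ≤ N → E (u k) (φ k) ≤ E (u (k - 1)) (φ (k - 1)) := by
  intro k hk hkN
  have hEq : E = energyFunctional e C ℓ α := funext₂ hE
  have hC : C.IsPositive :=
    C.isPositive_iff.2 ⟨hCsym, fun ψ => (mul_nonneg hcstar.le (sq_nonneg ‖ψ‖)).trans (hCcoer ψ)⟩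
  have hincr : u (k - 1) - u k ∈ V := by
    simpa using V.sub_mem (hmem (k - 1) (by omega)) (hmem k hkN)
  have hequil : ⟪C (e (u k) - φ k), e (u (k - 1) - u k)⟫ - ℓ (u (k - 1) - u k) = 0 :=
    sub_eq_zero.2 (heq1 k hkN _ hincr)
  have hgrad : α • φ k - C (e (u k) - φ k) = (η / τ) • (φ (k - 1) - φ k) := by
    linear_combination (norm := module) heq2 k hk hkN
  have hdissip : 0 ≤ ⟪α • φ k - C (e (u k) - φ k), φ (k - 1) - φ k⟫ := by
    rw [hgrad, real_inner_smul_left, real_inner_self_eq_norm_sq]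
    positivity
  have hconvex := energyFunctional_add_inner_le e hC ℓ hα (u k) (u (k - 1)) (φ k) (φ (k - 1))
  rw [hEq]
  linarith

/-- Energy decay for the time-discrete model (Corollary 4.1): for the solution of
the time-discrete model with time-independent data, the discrete energies
`Eᵏ := E(uᵏ, φᵏ)` are monotone nonincreasing. -/
theorem stmt_11
    {X Ψ : Type*}
    [NormedAddCommGroup X] [InnerProductSpace ℝ X] [CompleteSpace X]
    [NormedAddCommGroup Ψ] [InnerProductSpace ℝ Ψ] [CompleteSpace Ψ]
    (V : Submodule ℝ X) (hV : IsClosed (V : Set X))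
    (e : X →L[ℝ] Ψ) (C : Ψ →L[ℝ] Ψ)
    (hCsym : ∀ φ ψ : Ψ, ⟪C φ, ψ⟫ = ⟪φ, C ψ⟫)
    (cstar : ℝ) (hcstar : 0 < cstar)
    (hCcoer : ∀ ψ : Ψ, cstar * ‖ψ‖ ^ 2 ≤ ⟪C ψ, ψ⟫)
    (c₀ : ℝ) (hc₀ : 0 < c₀)
    (hacoer : ∀ v ∈ V, c₀ * ‖v‖ ^ 2 ≤ ⟪C (e v), e v⟫)
    (ℓ : X →L[ℝ] ℝ) (g : X) (η α : ℝ) (hη : 0 < η) (hα : 0 ≤ α)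
    (τ : ℝ) (hτ : 0 < τ) (N : ℕ)
    (E : X → Ψ → ℝ)
    (hE : ∀ u φ, E u φ =
      (1 / 2) * ⟪C (e u - φ), e u - φ⟫ + (α / 2) * ‖φ‖ ^ 2 - ℓ u)
    (u : ℕ → X) (φ : ℕ → Ψ)
    (hmem : ∀ k ≤ N, u k - g ∈ V)
    (heq1 : ∀ k ≤ N, ∀ v ∈ V, ⟪C (e (u k) - φ k), e v⟫ = ℓ v)
    (heq2 : ∀ k, 1 ≤ k → k ≤ N →
      (η / τ) • (φ k - φ (k - 1)) + α • φ k - C (e (u k) - φ k) = 0) :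
    ∀ k, 1 ≤ k → k ≤ N → E (u k) (φ k) ≤ E (u (k - 1)) (φ (k - 1)) :=
  stmt_11_general V e C hCsym cstar hcstar hCcoer ℓ g η α hη hα τ hτ N E hE u φ hmem heq1 heq2
end

section
/- Existence and uniqueness for the Galerkin (finite element) scheme (Theorem 5.1): let τ > 0, N ∈ ℕ, and for k = 0, …, N let ℓ^k ∈ X' and g_h^k ∈ X with e(g_h^k) ∈ Ψ_h and g_h^k − g_h^0 ∈ V_h, and let φ_h⁰ ∈ Ψ_h. Then there exists a unique family (u_h^k, φ_h^k) ∈ (g_h^k + V_h) × Ψ_h, k = 0, …, N, with φ_h⁰ the given initial value, satisfying: (a) ⟪C(e u_h^k − φ_h^k), e v_h⟫_Ψ = ℓ^k(v_h) for all v_h ∈ V_h and all k = 0, …, N; (b) η(φ_h^k − φ_h^{k−1})/τ + α φ_h^k − C(e u_h^k − φ_h^k) = 0 in Ψ for all k = 1, …, N. -/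
open scoped RealInnerProductSpace NNReal
open ContinuousLinearMap

set_option synthInstance.maxHeartbeats 1000000
set_option maxHeartbeats 1000000


lemma op_LM {H : Type*} [NormedAddCommGroup H] [InnerProductSpace ℝ H] [CompleteSpace H]
    (A : H →L[ℝ] H) (κ : ℝ) (hκ : 0 < κ) (hA : ∀ x, κ * ‖x‖ ^ 2 ≤ ⟪A x, x⟫)
    (y : H) : ∃! x, A x = y := by
  have below : ∀ x, κ * ‖x‖ ≤ ‖A x‖ := by
    intro x
    by_cases h : 0 < ‖x‖
    · refine (mul_le_mul_iff_left₀ h).mp ?_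
      calc κ * ‖x‖ * ‖x‖ = κ * ‖x‖ ^ 2 := by ring
        _ ≤ ⟪A x, x⟫ := hA x
        _ ≤ ‖A x‖ * ‖x‖ := real_inner_le_norm _ _
    · have : x = 0 := by simpa using h
      simp [this]
  have anti : AntilipschitzWith (κ⁻¹.toNNReal) A := by
    refine ContinuousLinearMap.antilipschitz_of_bound A ?_
    intro x
    rw [Real.coe_toNNReal', max_eq_left_of_lt (inv_pos.mpr hκ)]
    rw [inv_mul_eq_div, le_div_iff₀ hκ]
    nlinarith [below x]
  have hinj : Function.Injective A := anti.injective
  have hclosed : IsClosed ((LinearMap.range (A : H →ₗ[ℝ] H) : Submodule ℝ H) : Set H) :=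
    by rw [LinearMap.coe_range]; exact anti.isClosed_range A.uniformContinuous
  have hrange : LinearMap.range (A : H →ₗ[ℝ] H) = ⊤ := by
    haveI := hclosed.completeSpace_coe
    rw [← (LinearMap.range (A : H →ₗ[ℝ] H)).orthogonal_orthogonal, Submodule.eq_top_iff']
    intro v w hw
    have h0 : ⟪A w, w⟫ = 0 := hw _ ⟨w, rfl⟩
    have : w = 0 := by
      have := hA w
      rw [h0] at this
      have hw0 : ‖w‖ = 0 := by
        by_contra hne
        have hpos : 0 < ‖w‖ := (norm_nonneg w).lt_of_ne (Ne.symm hne)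
        nlinarith [mul_pos hκ (pow_pos hpos 2)]
      simpa using hw0
    simp [this]
  obtain ⟨x, hx⟩ := (LinearMap.range_eq_top.mp hrange) y
  exact ⟨x, hx, fun x' hx' => hinj (hx'.trans hx.symm)⟩

lemma inner_le_opnorm_mul {Ψ : Type*} [NormedAddCommGroup Ψ] [InnerProductSpace ℝ Ψ]
    (C : Ψ →L[ℝ] Ψ) (z : Ψ) : ⟪C z, z⟫ ≤ ‖C‖ * (‖z‖ * ‖z‖) := by
  have h1 := real_inner_le_norm (C z) z
  have h2 := C.le_opNorm z
  nlinarith [norm_nonneg z]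

lemma arith_aux {cstar γ c₀ nC w en d p Cdd Cee : ℝ}
    (hcstar : 0 < cstar) (hγ : 0 < γ) (hc₀ : 0 < c₀) (hnC : 0 ≤ nC)
    (hd : 0 ≤ d) (hp : 0 ≤ p) (hen : 0 ≤ en)
    (h1 : cstar * d ^ 2 ≤ Cdd) (h2 : c₀ * w ^ 2 ≤ Cee) (h3 : Cee ≤ nC * (en * en))
    (h4 : en ≤ d + p) :
    min cstar γ / (2 * (nC / c₀) + 1) * (w ^ 2 + p ^ 2) ≤ Cdd + γ * p ^ 2 := by
  set K : ℝ := nC / c₀ with hK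
  have hK0 : 0 ≤ K := by positivity
  have hw2 : w ^ 2 ≤ K * en ^ 2 := by
    rw [hK, div_mul_eq_mul_div, le_div_iff₀ hc₀]
    nlinarith
  have hsq : en ^ 2 ≤ 2 * d ^ 2 + 2 * p ^ 2 := by nlinarith [sq_nonneg (d - p)]
  have hm : 0 < min cstar γ := lt_min hcstar hγ
  have hden : (0:ℝ) < 2 * K + 1 := by positivity
  have hκeq : min cstar γ / (2 * K + 1) * (2 * K + 1) = min cstar γ :=
    div_mul_cancel₀ _ hden.ne'
  have hκ0 : 0 ≤ min cstar γ / (2 * K + 1) := by positivity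
  have hstep1 : w ^ 2 + p ^ 2 ≤ (2 * K + 1) * (d ^ 2 + p ^ 2) := by
    nlinarith [mul_nonneg hK0 (sq_nonneg d), mul_nonneg hK0 (sq_nonneg p), sq_nonneg p]
  have hstep2 : min cstar γ / (2 * K + 1) * (w ^ 2 + p ^ 2)
      ≤ min cstar γ * (d ^ 2 + p ^ 2) := by
    calc min cstar γ / (2 * K + 1) * (w ^ 2 + p ^ 2)
        ≤ min cstar γ / (2 * K + 1) * ((2 * K + 1) * (d ^ 2 + p ^ 2)) :=
          mul_le_mul_of_nonneg_left hstep1 hκ0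
      _ = min cstar γ * (d ^ 2 + p ^ 2) := by rw [← mul_assoc, hκeq]
  have hstep3 : min cstar γ * (d ^ 2 + p ^ 2) ≤ cstar * d ^ 2 + γ * p ^ 2 := by
    nlinarith [min_le_left cstar γ, min_le_right cstar γ, sq_nonneg d, sq_nonneg p]
  linarith

lemma stepk {X Ψ : Type*} [NormedAddCommGroup X] [InnerProductSpace ℝ X] [CompleteSpace X]
    [NormedAddCommGroup Ψ] [InnerProductSpace ℝ Ψ] [CompleteSpace Ψ]
    (e : X →L[ℝ] Ψ) (C : Ψ →L[ℝ] Ψ)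
    (cstar : ℝ) (hcstar : 0 < cstar)
    (hCcoer : ∀ ψ : Ψ, cstar * ‖ψ‖ ^ 2 ≤ ⟪C ψ, ψ⟫)
    (c₀ : ℝ) (hc₀ : 0 < c₀)
    (Vh : Submodule ℝ X) (hVh : IsClosed (Vh : Set X))
    (hacoer : ∀ v ∈ Vh, c₀ * ‖v‖ ^ 2 ≤ ⟪C (e v), e v⟫)
    (Ψh : Submodule ℝ Ψ) (hΨh : IsClosed (Ψh : Set Ψ))
    (he_h : ∀ v ∈ Vh, e v ∈ Ψh) (hC_h : ∀ ψ ∈ Ψh, C ψ ∈ Ψh)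
    (β α : ℝ) (hβ : 0 < β) (hα : 0 ≤ α)
    (L : X →L[ℝ] ℝ) (gk : X) (hgk : e gk ∈ Ψh)
    (ψp : Ψ) (hψp : ψp ∈ Ψh) :
    ∃! p : X × Ψ, p.1 ∈ Vh ∧ p.2 ∈ Ψh ∧
      (∀ v ∈ Vh, ⟪C (e (gk + p.1) - p.2), e v⟫ = L v) ∧
      (β • (p.2 - ψp) + α • p.2 - C (e (gk + p.1) - p.2) = 0) := by
  haveI : CompleteSpace Vh := hVh.completeSpace_coe
  haveI : CompleteSpace Ψh := hΨh.completeSpace_coe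
  set γ : ℝ := β + α with hγdef
  have hγ : 0 < γ := by positivity
  set E : ↥Vh →L[ℝ] Ψ := e.comp Vh.subtypeL with hE
  set J : ↥Ψh →L[ℝ] Ψ := Ψh.subtypeL with hJ
  set ι := WithLp.prodContinuousLinearEquiv 2 ℝ ↥Vh ↥Ψh with hι
  set P1 : (↥Vh × ↥Ψh) →L[ℝ] Ψ := E.comp (ContinuousLinearMap.fst ℝ ↥Vh ↥Ψh) with hP1
  set P2 : (↥Vh × ↥Ψh) →L[ℝ] Ψ := J.comp (ContinuousLinearMap.snd ℝ ↥Vh ↥Ψh) with hP2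
  set M1 : (↥Vh × ↥Ψh) →L[ℝ] Ψ := C.comp (P1 - P2) with hM1
  set M2 : (↥Vh × ↥Ψh) →L[ℝ] Ψ := γ • P2 + C.comp P2 - C.comp P1 with hM2
  set F : (↥Vh × ↥Ψh) →L[ℝ] (↥Vh × ↥Ψh) :=
    ((ContinuousLinearMap.adjoint E).comp M1).prod ((ContinuousLinearMap.adjoint J).comp M2)
    with hF
  set A : WithLp 2 (↥Vh × ↥Ψh) →L[ℝ] WithLp 2 (↥Vh × ↥Ψh) :=
    ((ι.symm : (↥Vh × ↥Ψh) →L[ℝ] WithLp 2 (↥Vh × ↥Ψh)).comp F).comp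
      (ι : WithLp 2 (↥Vh × ↥Ψh) →L[ℝ] (↥Vh × ↥Ψh)) with hA
  set y₀ : WithLp 2 (↥Vh × ↥Ψh) :=
    ι.symm ((InnerProductSpace.toDual ℝ ↥Vh).symm (L.comp Vh.subtypeL)
              - (ContinuousLinearMap.adjoint E) (C (e gk)),
            (ContinuousLinearMap.adjoint J) (β • ψp + C (e gk))) with hy₀
  -- master inner product identities
  have hAx : ∀ (w v : ↥Vh) (φ ψ : ↥Ψh),
      ⟪A (ι.symm (w, φ)), ι.symm (v, ψ)⟫
        = ⟪C (e (w:X)) - C (φ:Ψ), e (v:X)⟫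
          + (γ * ⟪(φ:Ψ), (ψ:Ψ)⟫ + ⟪C (φ:Ψ), (ψ:Ψ)⟫ - ⟪C (e (w:X)), (ψ:Ψ)⟫) := by
    intro w v φ ψ
    simp [hA, hF, hM1, hM2, hP1, hP2, hE, hJ, hι, WithLp.prod_inner_apply,
      WithLp.prodContinuousLinearEquiv_apply, WithLp.prodContinuousLinearEquiv_symm_apply,
      WithLp.toLp_fst, WithLp.toLp_snd, WithLp.ofLp_fst, WithLp.ofLp_snd,
      Submodule.coe_inner,
      ContinuousLinearMap.adjoint_inner_left, inner_sub_left, inner_add_left,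
      inner_smul_left, map_sub]
  have hyv : ∀ (v : ↥Vh) (ψ : ↥Ψh),
      ⟪y₀, ι.symm (v, ψ)⟫ = (L (v:X) - ⟪C (e gk), e (v:X)⟫) + ⟪β • ψp + C (e gk), (ψ:Ψ)⟫ := by
    intro v ψ
    simp [hy₀, hE, hJ, hι, WithLp.prod_inner_apply, inner_sub_left, inner_add_left,
      WithLp.prodContinuousLinearEquiv_apply, WithLp.prodContinuousLinearEquiv_symm_apply,
      WithLp.toLp_fst, WithLp.toLp_snd, WithLp.ofLp_fst, WithLp.ofLp_snd,
      Submodule.coe_inner, inner_smul_left,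
      ContinuousLinearMap.adjoint_inner_left, InnerProductSpace.toDual_symm_apply]
  have hxrep : ∀ x : WithLp 2 (↥Vh × ↥Ψh), ι.symm ((ι x).1, (ι x).2) = x := by
    intro x
    rw [Prod.mk.eta]
    exact ι.symm_apply_apply x
  have hnorm : ∀ (w : ↥Vh) (φ : ↥Ψh),
      ‖ι.symm (w, φ)‖ ^ 2 = ‖(w : X)‖ ^ 2 + ‖(φ : Ψ)‖ ^ 2 := by
    intro w φ
    rw [WithLp.prod_norm_sq_eq_of_L2]
    simp [hι]
  -- coercivity
  have hκpos : 0 < min cstar γ / (2 * (‖C‖ / c₀) + 1) := by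
    apply div_pos (lt_min hcstar hγ); positivity
  have hcoerA : ∀ x, min cstar γ / (2 * (‖C‖ / c₀) + 1) * ‖x‖ ^ 2 ≤ ⟪A x, x⟫ := by
    intro x
    rw [← hxrep x]
    generalize (ι x).1 = w
    generalize (ι x).2 = φ
    have expand : ⟪A (ι.symm (w, φ)), ι.symm (w, φ)⟫
        = ⟪C (e (w:X) - (φ:Ψ)), e (w:X) - (φ:Ψ)⟫ + γ * ‖(φ : Ψ)‖ ^ 2 := by
      rw [hAx w w φ φ]
      simp only [map_sub, inner_sub_left, inner_sub_right, real_inner_self_eq_norm_sq]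
      ring
    rw [expand, hnorm]
    refine arith_aux hcstar hγ hc₀ (norm_nonneg C) (norm_nonneg _) (norm_nonneg _)
      (norm_nonneg (e (w:X))) (hCcoer _) (hacoer _ w.2) (inner_le_opnorm_mul C _) ?_
    calc ‖e (w:X)‖ = ‖(e (w:X) - (φ:Ψ)) + (φ:Ψ)‖ := by rw [sub_add_cancel]
      _ ≤ ‖e (w:X) - (φ:Ψ)‖ + ‖(φ:Ψ)‖ := norm_add_le _ _
  -- membership of the residual
  have hmemD : ∀ (w : ↥Vh) (φ : ↥Ψh),
      γ • (φ : Ψ) + C (φ : Ψ) - C (e (w : X)) - (β • ψp + C (e gk)) ∈ Ψh := by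
    intro w φ
    exact Ψh.sub_mem
      (Ψh.sub_mem (Ψh.add_mem (Ψh.smul_mem _ φ.2) (hC_h _ φ.2)) (hC_h _ (he_h _ w.2)))
      (Ψh.add_mem (Ψh.smul_mem _ hψp) (hC_h _ hgk))
  -- identify (b) with the residual
  have hbD : ∀ (w : ↥Vh) (φ : ↥Ψh),
      β • ((φ : Ψ) - ψp) + α • (φ : Ψ) - C (e (gk + (w : X)) - (φ : Ψ))
        = γ • (φ : Ψ) + C (φ : Ψ) - C (e (w : X)) - (β • ψp + C (e gk)) := by
    intro w φ
    simp only [map_add, map_sub, smul_sub, hγdef, add_smul]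
    abel
  -- key equivalence
  have hkey : ∀ (w : ↥Vh) (φ : ↥Ψh), A (ι.symm (w, φ)) = y₀ ↔
      ((∀ v ∈ Vh, ⟪C (e (gk + (w : X)) - (φ : Ψ)), e v⟫ = L v) ∧
        (β • ((φ : Ψ) - ψp) + α • (φ : Ψ) - C (e (gk + (w : X)) - (φ : Ψ)) = 0)) := by
    intro w φ
    constructor
    · intro h
      have ha : ∀ v ∈ Vh, ⟪C (e (gk + (w : X)) - (φ : Ψ)), e v⟫ = L v := by
        intro v hv
        have h0 := congrArg (fun z => ⟪z, ι.symm ((⟨v, hv⟩ : ↥Vh), (0 : ↥Ψh))⟫) h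
        simp only [hAx, hyv] at h0
        simp only [ZeroMemClass.coe_zero, inner_zero_right, mul_zero, add_zero,
          sub_zero, zero_add] at h0
        simp only [inner_sub_left] at h0
        simp only [map_add, map_sub, inner_sub_left, inner_add_left]
        linarith only [h0]
      refine ⟨ha, ?_⟩
      have htest : ∀ ψh : ↥Ψh,
          ⟪γ • (φ : Ψ) + C (φ : Ψ) - C (e (w : X)) - (β • ψp + C (e gk)), (ψh : Ψ)⟫ = 0 := by
        intro ψh
        have h0 := congrArg (fun z => ⟪z, ι.symm ((0 : ↥Vh), ψh)⟫) h
        simp only [hAx, hyv] at h0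
        simp only [ZeroMemClass.coe_zero, map_zero, inner_zero_right, inner_zero_left,
          mul_zero, zero_sub, sub_zero, zero_add, add_zero, map_zero] at h0
        simp only [inner_sub_left, inner_add_left, inner_smul_left, RCLike.inner_apply,
          conj_trivial] at h0 ⊢
        linarith only [h0]
      have hD0 : γ • (φ : Ψ) + C (φ : Ψ) - C (e (w : X)) - (β • ψp + C (e gk)) = 0 := by
        have := htest ⟨_, hmemD w φ⟩
        rwa [inner_self_eq_zero] at this
      rw [hbD]; exact hD0
    · rintro ⟨ha, hb⟩
      have hD0 : γ • (φ : Ψ) + C (φ : Ψ) - C (e (w : X)) - (β • ψp + C (e gk)) = 0 := by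
        rw [← hbD]; exact hb
      have hall : ∀ y, ⟪A (ι.symm (w, φ)) - y₀, y⟫ = 0 := by
        intro y
        rw [← hxrep y]
        generalize (ι y).1 = v
        generalize (ι y).2 = ψ
        rw [inner_sub_left, hAx, hyv]
        have ha' := ha (v : X) v.2
        simp only [map_add, map_sub, inner_sub_left, inner_add_left] at ha'
        have hb' : ⟪γ • (φ : Ψ) + C (φ : Ψ) - C (e (w : X)) - (β • ψp + C (e gk)), (ψ : Ψ)⟫
            = 0 := by rw [hD0, inner_zero_left]
        simp only [inner_sub_left, inner_add_left, inner_smul_left, RCLike.inner_apply,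
          conj_trivial] at hb'
        simp only [map_add, map_sub, inner_sub_left, inner_add_left, inner_smul_left,
          RCLike.inner_apply, conj_trivial]
        linarith only [ha', hb']
      have := hall (A (ι.symm (w, φ)) - y₀)
      rw [inner_self_eq_zero, sub_eq_zero] at this
      exact this
  -- assemble
  obtain ⟨x, hx, hxu⟩ := op_LM A _ hκpos hcoerA y₀
  have hxe : A (ι.symm ((ι x).1, (ι x).2)) = y₀ := by rw [hxrep x]; exact hx
  obtain ⟨ha, hb⟩ := (hkey (ι x).1 (ι x).2).mp hxe
  refine ⟨((((ι x).1 : X)), (((ι x).2 : Ψ))), ⟨(ι x).1.2, (ι x).2.2, ha, hb⟩, ?_⟩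
  rintro ⟨w', φ'⟩ ⟨h1, h2, h3, h4⟩
  have hx' : ι.symm ((⟨w', h1⟩ : ↥Vh), (⟨φ', h2⟩ : ↥Ψh)) = x :=
    hxu _ ((hkey _ _).mpr ⟨h3, h4⟩)
  have h5 : ((⟨w', h1⟩ : ↥Vh), (⟨φ', h2⟩ : ↥Ψh)) = ι x := by
    rw [← hx', ContinuousLinearEquiv.apply_symm_apply]
  exact congrArg (fun q : ↥Vh × ↥Ψh => ((q.1 : X), (q.2 : Ψ))) h5

lemma step0 {X Ψ : Type*} [NormedAddCommGroup X] [InnerProductSpace ℝ X] [CompleteSpace X]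
    [NormedAddCommGroup Ψ] [InnerProductSpace ℝ Ψ] [CompleteSpace Ψ]
    (e : X →L[ℝ] Ψ) (C : Ψ →L[ℝ] Ψ)
    (c₀ : ℝ) (hc₀ : 0 < c₀)
    (Vh : Submodule ℝ X) (hVh : IsClosed (Vh : Set X))
    (hacoer : ∀ v ∈ Vh, c₀ * ‖v‖ ^ 2 ≤ ⟪C (e v), e v⟫)
    (L : X →L[ℝ] ℝ) (g0 : X) (φ0 : Ψ) :
    ∃! w : X, w ∈ Vh ∧ ∀ v ∈ Vh, ⟪C (e (g0 + w) - φ0), e v⟫ = L v := by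
  haveI : CompleteSpace Vh := hVh.completeSpace_coe
  set E : ↥Vh →L[ℝ] Ψ := e.comp Vh.subtypeL with hE
  set A : ↥Vh →L[ℝ] ↥Vh := (ContinuousLinearMap.adjoint E).comp (C.comp E) with hA
  set y : ↥Vh := (InnerProductSpace.toDual ℝ ↥Vh).symm (L.comp Vh.subtypeL)
      + (ContinuousLinearMap.adjoint E) (C φ0) - (ContinuousLinearMap.adjoint E) (C (e g0)) with hy
  have hAx : ∀ x v : ↥Vh, ⟪A x, v⟫ = ⟪C (e (x:X)), e (v:X)⟫ := by
    intro x v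
    simp [hA, hE, ContinuousLinearMap.adjoint_inner_left]
  have hyv : ∀ v : ↥Vh, ⟪y, v⟫ = L v + ⟪C φ0, e (v:X)⟫ - ⟪C (e g0), e (v:X)⟫ := by
    intro v
    simp [hy, inner_add_left, inner_sub_left, InnerProductSpace.toDual_symm_apply,
      ContinuousLinearMap.adjoint_inner_left, hE]
  have hkey : ∀ x : ↥Vh, A x = y ↔ ∀ v ∈ Vh, ⟪C (e (g0 + (x:X)) - φ0), e v⟫ = L v := by
    intro x
    constructor
    · intro h v hv
      have := congrArg (fun z => ⟪z, (⟨v, hv⟩ : ↥Vh)⟫) h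
      simp only [hAx, hyv] at this
      simp only [map_add, map_sub, inner_add_left, inner_sub_left]
      push_cast at this ⊢
      linarith [this]
    · intro h
      have hz : ∀ v : ↥Vh, ⟪A x - y, v⟫ = 0 := by
        intro v
        have h2 := h (v:X) v.2
        rw [inner_sub_left, hAx, hyv]
        simp only [map_add, map_sub, inner_add_left, inner_sub_left] at h2
        linarith [h2]
      have := hz (A x - y)
      rw [inner_self_eq_zero, sub_eq_zero] at this
      exact this
  have hcoer : ∀ x : ↥Vh, c₀ * ‖x‖ ^ 2 ≤ ⟪A x, x⟫ := by
    intro x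
    rw [hAx]
    simpa using hacoer (x:X) x.2
  obtain ⟨x, hx, hxu⟩ := op_LM A c₀ hc₀ hcoer y
  refine ⟨(x:X), ⟨x.2, (hkey x).mp hx⟩, ?_⟩
  intro w' ⟨hw1, hw2⟩
  have : (⟨w', hw1⟩ : ↥Vh) = x := hxu _ ((hkey _).mpr hw2)
  exact congrArg Subtype.val this


/-- Existence and uniqueness for the Galerkin (finite element) scheme (Theorem 5.1):
there is a unique family `(u_hᵏ, φ_hᵏ) ∈ (g_hᵏ + V_h) × Ψ_h`, `k = 0, …, N`, with
initial value `φ_h⁰`, satisfying the discrete scheme. -/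
theorem stmt_12
    {X Ψ : Type*}
    [NormedAddCommGroup X] [InnerProductSpace ℝ X] [CompleteSpace X]
    [NormedAddCommGroup Ψ] [InnerProductSpace ℝ Ψ] [CompleteSpace Ψ]
    (V : Submodule ℝ X) (hV : IsClosed (V : Set X))
    (e : X →L[ℝ] Ψ) (C : Ψ →L[ℝ] Ψ)
    (hCsym : ∀ φ ψ : Ψ, ⟪C φ, ψ⟫ = ⟪φ, C ψ⟫)
    (cstar : ℝ) (hcstar : 0 < cstar)
    (hCcoer : ∀ ψ : Ψ, cstar * ‖ψ‖ ^ 2 ≤ ⟪C ψ, ψ⟫)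
    (c₀ : ℝ) (hc₀ : 0 < c₀)
    (hacoer : ∀ v ∈ V, c₀ * ‖v‖ ^ 2 ≤ ⟪C (e v), e v⟫)
    (η α : ℝ) (hη : 0 < η) (hα : 0 ≤ α)
    (Vh : Submodule ℝ X) (hVhV : Vh ≤ V) (hVh : IsClosed (Vh : Set X))
    (Ψh : Submodule ℝ Ψ) (hΨh : IsClosed (Ψh : Set Ψ))
    (he_h : ∀ v ∈ Vh, e v ∈ Ψh)
    (hC_h : ∀ ψ ∈ Ψh, C ψ ∈ Ψh)
    (τ : ℝ) (hτ : 0 < τ) (N : ℕ)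
    (ℓ : ℕ → X →L[ℝ] ℝ) (g : ℕ → X)
    (hg_e : ∀ k ≤ N, e (g k) ∈ Ψh)
    (hg_diff : ∀ k ≤ N, g k - g 0 ∈ Vh)
    (φ0 : Ψ) (hφ0 : φ0 ∈ Ψh) :
    ∃ (u : ℕ → X) (φ : ℕ → Ψ),
      (φ 0 = φ0 ∧
       (∀ k ≤ N, u k - g k ∈ Vh) ∧
       (∀ k ≤ N, φ k ∈ Ψh) ∧
       (∀ k ≤ N, ∀ v ∈ Vh, ⟪C (e (u k) - φ k), e v⟫ = ℓ k v) ∧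
       (∀ k, 1 ≤ k → k ≤ N →
         (η / τ) • (φ k - φ (k - 1)) + α • φ k - C (e (u k) - φ k) = 0)) ∧
      (∀ (u' : ℕ → X) (φ' : ℕ → Ψ),
        φ' 0 = φ0 →
        (∀ k ≤ N, u' k - g k ∈ Vh) →
        (∀ k ≤ N, φ' k ∈ Ψh) →
        (∀ k ≤ N, ∀ v ∈ Vh, ⟪C (e (u' k) - φ' k), e v⟫ = ℓ k v) →
        (∀ k, 1 ≤ k → k ≤ N →
          (η / τ) • (φ' k - φ' (k - 1)) + α • φ' k - C (e (u' k) - φ' k) = 0) →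
        ∀ k ≤ N, u' k = u k ∧ φ' k = φ k) := by
  have hacoer' : ∀ v ∈ Vh, c₀ * ‖v‖ ^ 2 ≤ ⟪C (e v), e v⟫ := fun v hv => hacoer v (hVhV hv)
  have hβ : 0 < η / τ := div_pos hη hτ
  let g' : ℕ → X := fun k => g (min k N)
  let ℓ' : ℕ → X →L[ℝ] ℝ := fun k => ℓ (min k N)
  have hg'_e : ∀ k, e (g' k) ∈ Ψh := fun k => hg_e _ (min_le_right k N)
  have hg'_eq : ∀ k ≤ N, g' k = g k := fun k hk => by simp [g', min_eq_left hk]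
  have hℓ'_eq : ∀ k ≤ N, ℓ' k = ℓ k := fun k hk => by simp [ℓ', min_eq_left hk]
  -- the solvers
  have sol0 : ∃! w : X, w ∈ Vh ∧ ∀ v ∈ Vh, ⟪C (e (g 0 + w) - φ0), e v⟫ = ℓ 0 v :=
    step0 e C c₀ hc₀ Vh hVh hacoer' (ℓ 0) (g 0) φ0
  have solk : ∀ (k : ℕ) (ψp : Ψ), ψp ∈ Ψh →
      ∃! p : X × Ψ, p.1 ∈ Vh ∧ p.2 ∈ Ψh ∧
        (∀ v ∈ Vh, ⟪C (e (g' k + p.1) - p.2), e v⟫ = ℓ' k v) ∧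
        ((η / τ) • (p.2 - ψp) + α • p.2 - C (e (g' k + p.1) - p.2) = 0) :=
    fun k ψp hψp =>
      stepk e C cstar hcstar hCcoer c₀ hc₀ Vh hVh hacoer' Ψh hΨh he_h hC_h
        (η / τ) α hβ hα (ℓ' k) (g' k) (hg'_e k) ψp hψp
  -- recursive construction
  let q : ℕ → X × ↥Ψh := fun n =>
    Nat.rec (motive := fun _ => X × ↥Ψh)
      ⟨g 0 + sol0.exists.choose, ⟨φ0, hφ0⟩⟩
      (fun k prev =>
        ⟨g' (k + 1) + (solk (k + 1) (prev.2 : Ψ) prev.2.2).exists.choose.1,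
         ⟨(solk (k + 1) (prev.2 : Ψ) prev.2.2).exists.choose.2,
          (solk (k + 1) (prev.2 : Ψ) prev.2.2).exists.choose_spec.2.1⟩⟩) n
  let u : ℕ → X := fun k => (q k).1
  let φ : ℕ → Ψ := fun k => ((q k).2 : Ψ)
  have hφmem : ∀ k, φ k ∈ Ψh := fun k => (q k).2.2
  have hφ00 : φ 0 = φ0 := rfl
  have hw0spec := sol0.exists.choose_spec
  have hu0 : u 0 = g 0 + sol0.exists.choose := rfl
  -- spec at each step
  have hspec : ∀ k : ℕ,
      (u (k + 1) - g' (k + 1) ∈ Vh) ∧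
      (∀ v ∈ Vh, ⟪C (e (u (k + 1)) - φ (k + 1)), e v⟫ = ℓ' (k + 1) v) ∧
      ((η / τ) • (φ (k + 1) - φ k) + α • φ (k + 1) - C (e (u (k + 1)) - φ (k + 1)) = 0) := by
    intro k
    obtain ⟨hs1, hs2, hs3, hs4⟩ := (solk (k + 1) ((q k).2 : Ψ) (q k).2.2).exists.choose_spec
    have e1 : u (k + 1) = g' (k + 1) + (solk (k + 1) ((q k).2 : Ψ) (q k).2.2).exists.choose.1 :=
      rfl
    have e2 : φ (k + 1) = (solk (k + 1) ((q k).2 : Ψ) (q k).2.2).exists.choose.2 := rfl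
    refine ⟨?_, ?_, ?_⟩
    · rw [e1, add_sub_cancel_left]; exact hs1
    · intro v hv; rw [e1, e2]; exact hs3 v hv
    · rw [e1, e2]; exact hs4
  refine ⟨u, φ, ⟨hφ00, ?_, fun k _ => hφmem k, ?_, ?_⟩, ?_⟩
  · -- u k - g k ∈ Vh
    intro k hk
    cases k with
    | zero => rw [hu0, add_sub_cancel_left]; exact hw0spec.1
    | succ j =>
      have := (hspec j).1
      rwa [hg'_eq _ hk] at this
  · -- equation (a)
    intro k hk v hv
    cases k with
    | zero =>
      have := hw0spec.2 v hv
      rwa [← hu0] at this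
    | succ j =>
      have := (hspec j).2.1 v hv
      rwa [hℓ'_eq _ hk] at this
  · -- equation (b)
    intro k hk1 hk2
    cases k with
    | zero => omega
    | succ j =>
      have := (hspec j).2.2
      simpa using this
  · -- uniqueness
    intro u' φ' h₁ h₂ h₃ h₄ h₅
    intro k
    induction k with
    | zero =>
      intro _
      constructor
      · have hcand : u' 0 - g 0 ∈ Vh ∧
            ∀ v ∈ Vh, ⟪C (e (g 0 + (u' 0 - g 0)) - φ0), e v⟫ = ℓ 0 v := by
          refine ⟨h₂ 0 (Nat.zero_le N), ?_⟩
          intro v hv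
          rw [add_sub_cancel]
          rw [← h₁]
          exact h₄ 0 (Nat.zero_le N) v hv
        have := sol0.unique hcand hw0spec
        rw [hu0, ← this, add_sub_cancel]
      · rw [h₁, hφ00]
    | succ j ih =>
      intro hk
      obtain ⟨hu'j, hφ'j⟩ := ih (Nat.le_of_succ_le hk)
      obtain ⟨hs1, hs2, hs3, hs4⟩ := (solk (j + 1) ((q j).2 : Ψ) (q j).2.2).exists.choose_spec
      have e1 : u (j + 1) = g' (j + 1) + (solk (j + 1) ((q j).2 : Ψ) (q j).2.2).exists.choose.1 :=
        rfl
      have e2 : φ (j + 1) = (solk (j + 1) ((q j).2 : Ψ) (q j).2.2).exists.choose.2 := rfl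
      have hcand : (u' (j + 1) - g (j + 1), φ' (j + 1)).1 ∈ Vh ∧
          (u' (j + 1) - g (j + 1), φ' (j + 1)).2 ∈ Ψh ∧
          (∀ v ∈ Vh, ⟪C (e (g' (j + 1) + (u' (j + 1) - g (j + 1), φ' (j + 1)).1)
              - (u' (j + 1) - g (j + 1), φ' (j + 1)).2), e v⟫ = ℓ' (j + 1) v) ∧
          ((η / τ) • ((u' (j + 1) - g (j + 1), φ' (j + 1)).2 - ((q j).2 : Ψ))
            + α • (u' (j + 1) - g (j + 1), φ' (j + 1)).2
            - C (e (g' (j + 1) + (u' (j + 1) - g (j + 1), φ' (j + 1)).1)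
                - (u' (j + 1) - g (j + 1), φ' (j + 1)).2) = 0) := by
        refine ⟨h₂ _ hk, h₃ _ hk, ?_, ?_⟩
        · intro v hv
          rw [hg'_eq _ hk, hℓ'_eq _ hk, add_sub_cancel]
          exact h₄ _ hk v hv
        · rw [hg'_eq _ hk, add_sub_cancel]
          have hb := h₅ (j + 1) (Nat.le_add_left 1 j) hk
          simp only [Nat.add_sub_cancel] at hb
          have : ((q j).2 : Ψ) = φ' j := hφ'j.symm
          rw [this]
          exact hb
      have huniq := (solk (j + 1) ((q j).2 : Ψ) (q j).2.2).unique hcand ⟨hs1, hs2, hs3, hs4⟩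
      have hfst : u' (j + 1) - g (j + 1)
          = (solk (j + 1) ((q j).2 : Ψ) (q j).2.2).exists.choose.1 :=
        congrArg Prod.fst huniq
      have hsnd : φ' (j + 1) = (solk (j + 1) ((q j).2 : Ψ) (q j).2.2).exists.choose.2 :=
        congrArg Prod.snd huniq
      constructor
      · rw [e1, ← hfst, hg'_eq _ hk]
        abel
      · rw [e2, ← hsnd]
end

section
/- Gradient flow structure for the Galerkin (finite element) scheme (Theorem 5.2(i)): assume time-independent data ℓ ∈ X' and g_h ∈ X with e(g_h) ∈ Ψ_h, and let (u_h^k, φ_h^k) ∈ (g_h + V_h) × Ψ_h, k = 0, …, N, be the solution of the discrete scheme with initial value φ_h⁰ ∈ Ψ_h. Then for every k = 1, …, N and every ψ_h ∈ Ψ_h, η⟪(φ_h^k − φ_h^{k−1})/τ, ψ_h⟫_Ψ = −(∂E_{h*})(φ_h^k)[ψ_h]. -/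
/-!
The reduced energy `E_{h*}(ψ) = E(ū(ψ), ψ)` has gradient `α ψ - C (e ū(ψ) - ψ)`, the partial
gradient of `E` in `ψ` (envelope theorem). Indeed, expanding the quadratic energy around the
Galerkin solutions gives, with `w = ū(φ) - ū(φ + δ)`,
`E_{h*}(φ + δ) = E_{h*}(φ) + ⟪α φ - C (e ū(φ) - φ), δ⟫ + ½⟪C δ, δ⟫ + (α/2)‖δ‖² - ½⟪C (e w), e w⟫`,
and Galerkin orthogonality together with positivity of `C` gives `0 ≤ ⟪C (e w), e w⟫ ≤ ⟪C δ, δ⟫`,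
so the remainder is `O(‖δ‖²)`. Coercivity of `C` makes `e ū(φ)` unique, so at `φ = φ_hᵏ` the
Galerkin solution may be replaced by `u_hᵏ`, and the second equation of the scheme identifies the
gradient with `-η (φ_hᵏ - φ_hᵏ⁻¹) / τ`.
-/

open scoped RealInnerProductSpace

section InnerProduct

variable {Ψ : Type*} [NormedAddCommGroup Ψ] [InnerProductSpace ℝ Ψ]

theorem ContinuousLinearMap.inner_apply_add_add_of_isSymmetric (C : Ψ →L[ℝ] Ψ)
    (hC : C.IsSymmetric) (a b : Ψ) :
    ⟪C (a + b), a + b⟫ = ⟪C a, a⟫ + 2 * ⟪C a, b⟫ + ⟪C b, b⟫ := by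
  have hba : ⟪C b, a⟫ = ⟪C a, b⟫ := by rw [hC.apply_clm, real_inner_comm]
  rw [map_add, inner_add_left, inner_add_right, inner_add_right, hba]
  ring

theorem ContinuousLinearMap.inner_apply_self_le (C : Ψ →L[ℝ] Ψ) (δ : Ψ) :
    ⟪C δ, δ⟫ ≤ ‖C‖ * ‖δ‖ ^ 2 :=
  calc ⟪C δ, δ⟫ ≤ ‖C δ‖ * ‖δ‖ := real_inner_le_norm _ _
    _ ≤ ‖C‖ * ‖δ‖ * ‖δ‖ := by gcongr; exact C.le_opNorm δ
    _ = ‖C‖ * ‖δ‖ ^ 2 := by ring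

theorem hasFDerivAt_of_abs_sub_inner_le {f : Ψ → ℝ} {x g : Ψ} {K : ℝ}
    (h : ∀ δ, |f (x + δ) - f x - ⟪g, δ⟫| ≤ K * ‖δ‖ ^ 2) :
    HasFDerivAt f (innerSL ℝ g) x := by
  rw [hasFDerivAt_iff_isLittleO_nhds_zero]
  refine (Asymptotics.IsBigO.of_bound K (Filter.Eventually.of_forall fun δ => ?_)).trans_isLittleO
    (Asymptotics.isLittleO_norm_pow_id one_lt_two)
  simpa using h δ

end InnerProduct

namespace GalerkinGradientFlow

variable {X Ψ : Type*} [NormedAddCommGroup X] [InnerProductSpace ℝ X]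
  [NormedAddCommGroup Ψ] [InnerProductSpace ℝ Ψ]

noncomputable def energy (e : X →L[ℝ] Ψ) (C : Ψ →L[ℝ] Ψ) (α : ℝ) (ℓ : X →L[ℝ] ℝ) (u : X)
    (φ : Ψ) : ℝ :=
  (1 / 2) * ⟪C (e u - φ), e u - φ⟫ + (α / 2) * ‖φ‖ ^ 2 - ℓ u

def IsGalerkinSolution (W : Submodule ℝ X) (e : X →L[ℝ] Ψ) (C : Ψ →L[ℝ] Ψ)
    (ℓ : X →L[ℝ] ℝ) (φ : Ψ) (u : X) : Prop :=
  ∀ v ∈ W, ⟪C (e u - φ), e v⟫ = ℓ v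

variable {W : Submodule ℝ X} {e : X →L[ℝ] Ψ} {C : Ψ →L[ℝ] Ψ} {α : ℝ} {ℓ : X →L[ℝ] ℝ}

theorem energy_add_right (hC : C.IsSymmetric) (u : X) (φ δ : Ψ) :
    energy e C α ℓ u (φ + δ) = energy e C α ℓ u φ + ⟪α • φ - C (e u - φ), δ⟫
      + (1 / 2) * ⟪C δ, δ⟫ + (α / 2) * ‖δ‖ ^ 2 := by
  have hsplit : e u - (φ + δ) = (e u - φ) + -δ := by abel
  rw [energy, energy, hsplit, C.inner_apply_add_add_of_isSymmetric hC, norm_add_sq_real]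
  simp only [map_neg, inner_neg_left, inner_neg_right, neg_neg, inner_sub_left, real_inner_smul_left]
  ring

theorem IsGalerkinSolution.energy_add (hC : C.IsSymmetric) {φ : Ψ} {u w : X}
    (hu : IsGalerkinSolution W e C ℓ φ u) (hw : w ∈ W) :
    energy e C α ℓ (u + w) φ = energy e C α ℓ u φ + (1 / 2) * ⟪C (e w), e w⟫ := by
  have hsplit : e (u + w) - φ = (e u - φ) + e w := by rw [map_add]; abel
  rw [energy, energy, hsplit, C.inner_apply_add_add_of_isSymmetric hC, hu w hw, map_add]
  ring

theorem IsGalerkinSolution.inner_sub_eq_zero {φ₁ φ₂ : Ψ} {u₁ u₂ v : X}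
    (h₁ : IsGalerkinSolution W e C ℓ φ₁ u₁) (h₂ : IsGalerkinSolution W e C ℓ φ₂ u₂)
    (hv : v ∈ W) : ⟪C ((e u₁ - φ₁) - (e u₂ - φ₂)), e v⟫ = 0 := by
  rw [map_sub, inner_sub_left, h₁ v hv, h₂ v hv, sub_self]

theorem IsGalerkinSolution.inner_apply_sub_le (hC : C.IsPositive) {φ₁ φ₂ : Ψ} {u₁ u₂ : X}
    (h₁ : IsGalerkinSolution W e C ℓ φ₁ u₁) (h₂ : IsGalerkinSolution W e C ℓ φ₂ u₂)
    (hw : u₁ - u₂ ∈ W) :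
    ⟪C (e (u₁ - u₂)), e (u₁ - u₂)⟫ ≤ ⟪C (φ₁ - φ₂), φ₁ - φ₂⟫ := by
  set w := e (u₁ - u₂)
  set d := φ₁ - φ₂
  have horth : ⟪C (w - d), w⟫ = 0 := by
    have hwd : w - d = (e u₁ - φ₁) - (e u₂ - φ₂) := by simp only [w, d, map_sub]; abel
    rw [hwd]; exact h₁.inner_sub_eq_zero h₂ hw
  have hsym : ⟪C d, w⟫ = ⟪C w, d⟫ := by rw [hC.isSymmetric.apply_clm, real_inner_comm]
  have hpos := hC.inner_nonneg_left (w - d)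
  rw [sub_eq_add_neg, C.inner_apply_add_add_of_isSymmetric hC.isSymmetric] at hpos
  rw [map_sub, inner_sub_left] at horth
  simp only [map_neg, inner_neg_left, inner_neg_right, neg_neg] at hpos
  linarith

theorem IsGalerkinSolution.map_eq_of_coercive {c : ℝ} (hc : 0 < c)
    (hcoer : ∀ ψ, c * ‖ψ‖ ^ 2 ≤ ⟪C ψ, ψ⟫) {φ : Ψ} {u₁ u₂ : X}
    (h₁ : IsGalerkinSolution W e C ℓ φ u₁) (h₂ : IsGalerkinSolution W e C ℓ φ u₂)
    (hw : u₁ - u₂ ∈ W) : e u₁ = e u₂ := by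
  have hzero : ⟪C (e (u₁ - u₂)), e (u₁ - u₂)⟫ = 0 := by
    simpa [map_sub] using h₁.inner_sub_eq_zero h₂ hw
  have hnorm : ‖e (u₁ - u₂)‖ ^ 2 ≤ 0 :=
    nonpos_of_mul_nonpos_right ((hcoer _).trans hzero.le) hc
  have hsub : e (u₁ - u₂) = 0 :=
    norm_eq_zero.1 ((pow_eq_zero_iff two_ne_zero).1 (hnorm.antisymm (sq_nonneg _)))
  rwa [map_sub, sub_eq_zero] at hsub

theorem hasFDerivAt_energy_galerkinSolution (hC : C.IsPositive) (hα : 0 ≤ α) {g : X}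
    {ū : Ψ → X} (hmem : ∀ ψ, ū ψ - g ∈ W) (hsol : ∀ ψ, IsGalerkinSolution W e C ℓ ψ (ū ψ))
    (φ : Ψ) :
    HasFDerivAt (fun ψ => energy e C α ℓ (ū ψ) ψ) (innerSL ℝ (α • φ - C (e (ū φ) - φ))) φ := by
  refine hasFDerivAt_of_abs_sub_inner_le (K := (‖C‖ + α) / 2) fun δ => ?_
  have hw : ū φ - ū (φ + δ) ∈ W := by
    simpa only [sub_sub_sub_cancel_right] using W.sub_mem (hmem φ) (hmem (φ + δ))
  have hstable : ⟪C (e (ū φ - ū (φ + δ))), e (ū φ - ū (φ + δ))⟫ ≤ ⟪C δ, δ⟫ := by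
    simpa using (hsol φ).inner_apply_sub_le hC (hsol (φ + δ)) hw
  have hexpand := energy_add_right (e := e) (α := α) (ℓ := ℓ) hC.isSymmetric (ū φ) φ δ
  rw [← add_sub_cancel (ū (φ + δ)) (ū φ), (hsol (φ + δ)).energy_add hC.isSymmetric hw,
    add_sub_cancel] at hexpand
  have hpos := hC.inner_nonneg_left (e (ū φ - ū (φ + δ)))
  have hbound := C.inner_apply_self_le δ
  have hαδ := mul_nonneg hα (sq_nonneg ‖δ‖)
  rw [abs_le]
  constructor <;> linarith

end GalerkinGradientFlow

open GalerkinGradientFlow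

theorem stmt_13_general
    {X Ψ : Type*}
    [NormedAddCommGroup X] [InnerProductSpace ℝ X]
    [NormedAddCommGroup Ψ] [InnerProductSpace ℝ Ψ]
    (e : X →L[ℝ] Ψ) (C : Ψ →L[ℝ] Ψ)
    (hCsym : ∀ φ ψ : Ψ, ⟪C φ, ψ⟫ = ⟪φ, C ψ⟫)
    (cstar : ℝ) (hcstar : 0 < cstar)
    (hCcoer : ∀ ψ : Ψ, cstar * ‖ψ‖ ^ 2 ≤ ⟪C ψ, ψ⟫)
    (η α : ℝ) (hα : 0 ≤ α)
    (Vh : Submodule ℝ X)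
    (Ψh : Submodule ℝ Ψ)
    (τ : ℝ) (N : ℕ)
    (ℓ : X →L[ℝ] ℝ) (gh : X)
    (E : X → Ψ → ℝ)
    (hE : ∀ u φ, E u φ =
      (1 / 2) * ⟪C (e u - φ), e u - φ⟫ + (α / 2) * ‖φ‖ ^ 2 - ℓ u)
    (ubarh : Ψ → X)
    (hubarh_mem : ∀ ψ : Ψ, ubarh ψ - gh ∈ Vh)
    (hubarh_weak : ∀ ψ : Ψ, ∀ v ∈ Vh, ⟪C (e (ubarh ψ) - ψ), e v⟫ = ℓ v)
    (Ehstar : Ψ → ℝ)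
    (hEhstar : ∀ ψ : Ψ, Ehstar ψ = E (ubarh ψ) ψ)
    (u : ℕ → X) (φ : ℕ → Ψ)
    (hmem : ∀ k ≤ N, u k - gh ∈ Vh)
    (heq1 : ∀ k ≤ N, ∀ v ∈ Vh, ⟪C (e (u k) - φ k), e v⟫ = ℓ v)
    (heq2 : ∀ k, 1 ≤ k → k ≤ N →
      (η / τ) • (φ k - φ (k - 1)) + α • φ k - C (e (u k) - φ k) = 0) :
    ∀ k, 1 ≤ k → k ≤ N → ∀ ψh ∈ Ψh,
      HasDerivAt (fun ε : ℝ => Ehstar (φ k + ε • ψh))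
        (-(η * ⟪τ⁻¹ • (φ k - φ (k - 1)), ψh⟫)) 0 := by
  intro k hk1 hkN ψh _
  obtain rfl : E = energy e C α ℓ := funext₂ hE
  obtain rfl : Ehstar = fun ψ => energy e C α ℓ (ubarh ψ) ψ := funext hEhstar
  have hCpos : C.IsPositive :=
    C.isPositive_iff.2 ⟨hCsym, fun ψ => (by positivity : 0 ≤ cstar * ‖ψ‖ ^ 2).trans (hCcoer ψ)⟩
  have hsame : e (ubarh (φ k)) = e (u k) :=
    IsGalerkinSolution.map_eq_of_coercive hcstar hCcoer (hubarh_weak (φ k)) (heq1 k hkN)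
      (by simpa only [sub_sub_sub_cancel_right] using Vh.sub_mem (hubarh_mem (φ k)) (hmem k hkN))
  have hgrad : α • φ k - C (e (ubarh (φ k)) - φ k) = -((η / τ) • (φ k - φ (k - 1))) := by
    rw [hsame, ← sub_eq_zero, ← heq2 k hk1 hkN]; abel
  have hline : HasDerivAt (fun ε : ℝ => φ k + ε • ψh) ψh 0 := by
    simpa using ((hasDerivAt_id (0 : ℝ)).smul_const ψh).const_add (φ k)
  have hderiv := (hasFDerivAt_energy_galerkinSolution hCpos hα hubarh_mem hubarh_weak
    (φ k)).comp_hasDerivAt_of_eq (0 : ℝ) hline (by simp)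
  rw [innerSL_apply_apply, hgrad, inner_neg_left, real_inner_smul_left] at hderiv
  rwa [real_inner_smul_left, ← mul_assoc, ← div_eq_mul_inv]

/-- Gradient flow structure for the Galerkin (finite element) scheme
(Theorem 5.2(i)): for time-independent data, the solution of the discrete scheme
satisfies `η⟪(φ_hᵏ − φ_hᵏ⁻¹)/τ, ψ_h⟫ = −(∂E_{h*})(φ_hᵏ)[ψ_h]` for `k = 1, …, N`
and all `ψ_h ∈ Ψ_h`. -/
theorem stmt_13
    {X Ψ : Type*}
    [NormedAddCommGroup X] [InnerProductSpace ℝ X] [CompleteSpace X]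
    [NormedAddCommGroup Ψ] [InnerProductSpace ℝ Ψ] [CompleteSpace Ψ]
    (V : Submodule ℝ X) (hV : IsClosed (V : Set X))
    (e : X →L[ℝ] Ψ) (C : Ψ →L[ℝ] Ψ)
    (hCsym : ∀ φ ψ : Ψ, ⟪C φ, ψ⟫ = ⟪φ, C ψ⟫)
    (cstar : ℝ) (hcstar : 0 < cstar)
    (hCcoer : ∀ ψ : Ψ, cstar * ‖ψ‖ ^ 2 ≤ ⟪C ψ, ψ⟫)
    (c₀ : ℝ) (hc₀ : 0 < c₀)
    (hacoer : ∀ v ∈ V, c₀ * ‖v‖ ^ 2 ≤ ⟪C (e v), e v⟫)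
    (η α : ℝ) (hη : 0 < η) (hα : 0 ≤ α)
    (Vh : Submodule ℝ X) (hVhV : Vh ≤ V) (hVh : IsClosed (Vh : Set X))
    (Ψh : Submodule ℝ Ψ) (hΨh : IsClosed (Ψh : Set Ψ))
    (he_h : ∀ v ∈ Vh, e v ∈ Ψh)
    (hC_h : ∀ ψ ∈ Ψh, C ψ ∈ Ψh)
    (τ : ℝ) (hτ : 0 < τ) (N : ℕ)
    (ℓ : X →L[ℝ] ℝ) (gh : X) (hgh : e gh ∈ Ψh)
    (E : X → Ψ → ℝ)
    (hE : ∀ u φ, E u φ =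
      (1 / 2) * ⟪C (e u - φ), e u - φ⟫ + (α / 2) * ‖φ‖ ^ 2 - ℓ u)
    (ubarh : Ψ → X)
    (hubarh_mem : ∀ ψ : Ψ, ubarh ψ - gh ∈ Vh)
    (hubarh_weak : ∀ ψ : Ψ, ∀ v ∈ Vh, ⟪C (e (ubarh ψ) - ψ), e v⟫ = ℓ v)
    (hubarh_min : ∀ ψ : Ψ, ∀ v : X, v - gh ∈ Vh → E (ubarh ψ) ψ ≤ E v ψ)
    (Ehstar : Ψ → ℝ)
    (hEhstar : ∀ ψ : Ψ, Ehstar ψ = E (ubarh ψ) ψ)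
    (u : ℕ → X) (φ : ℕ → Ψ) (φ0 : Ψ) (hφ0mem : φ0 ∈ Ψh)
    (hφ0 : φ 0 = φ0)
    (hmem : ∀ k ≤ N, u k - gh ∈ Vh)
    (hφmem : ∀ k ≤ N, φ k ∈ Ψh)
    (heq1 : ∀ k ≤ N, ∀ v ∈ Vh, ⟪C (e (u k) - φ k), e v⟫ = ℓ v)
    (heq2 : ∀ k, 1 ≤ k → k ≤ N →
      (η / τ) • (φ k - φ (k - 1)) + α • φ k - C (e (u k) - φ k) = 0) :
    ∀ k, 1 ≤ k → k ≤ N → ∀ ψh ∈ Ψh,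
      HasDerivAt (fun ε : ℝ => Ehstar (φ k + ε • ψh))
        (-(η * ⟪τ⁻¹ • (φ k - φ (k - 1)), ψh⟫)) 0 :=
  stmt_13_general e C hCsym cstar hcstar hCcoer η α hα Vh Ψh τ N ℓ gh E hE ubarh hubarh_mem
    hubarh_weak Ehstar hEhstar u φ hmem heq1 heq2
end

section
/- Gradient flow structure for the hereditary-integral viscoelastic model (Remark 3.3(i)): let α ≥ 1, and let (u, φ) : [0, T] → X × Ψ be continuously differentiable with u(t) ∈ g + V for all t, satisfying for all t ∈ (0, T): (a) ⟪C(e u(t) − φ(t)), e v⟫_Ψ = ℓ(v) for all v ∈ V, and (b) φ'(t) + α φ(t) = e u(t) in Ψ. Then for every t ∈ (0, T) and every ψ ∈ Ψ, ⟪C φ'(t), ψ⟫_Ψ = −(∂Ẽ_*)(φ(t))[ψ]. -/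
/-!
Any two solutions of the Euler–Lagrange equation `⟪C(e u − φ), e v⟫ = ℓ v` (`v ∈ V`) in `g + V`
have the same energy (testing the equation for their difference `w` with `w` itself gives
`⟪C(e w), e w⟫ = 0`), and solutions depend affinely on `φ`. Hence along the line `φ(t) + εψ`
the reduced energy is the energy along the line `(u(t) + εd, φ(t) + εψ)`, where `d ∈ V` is the
difference of two solutions. Its derivative at `ε = 0` is
`⟪C(e u − φ), e d − ψ⟫ + (α − 1)⟪Cφ, ψ⟫ − ℓ d = −⟪C(e u − αφ), ψ⟫`, since the Euler–Lagrange
equation cancels the `d`-terms, and `e u − αφ = φ'` by the evolution equation.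
-/

open scoped RealInnerProductSpace

namespace Viscoelastic

variable {X Ψ : Type*} [NormedAddCommGroup X] [InnerProductSpace ℝ X]
  [NormedAddCommGroup Ψ] [InnerProductSpace ℝ Ψ]
  (V : Submodule ℝ X) (e : X →L[ℝ] Ψ) (C : Ψ →L[ℝ] Ψ) (ℓ : X →L[ℝ] ℝ) (α : ℝ)

noncomputable def energy (u : X) (φ : Ψ) : ℝ :=
  (1 / 2) * ⟪C (e u - φ), e u - φ⟫ + ((α - 1) / 2) * ⟪C φ, φ⟫ - ℓ u

noncomputable def reducedEnergy (ubar : Ψ → X) (φ : Ψ) : ℝ :=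
  energy e C ℓ α (ubar φ) φ

def IsWeakSolution (φ : Ψ) (u : X) : Prop :=
  ∀ v ∈ V, ⟪C (e u - φ), e v⟫ = ℓ v

variable {V e C ℓ}

theorem hasDerivAt_add_smul {E : Type*} [NormedAddCommGroup E] [NormedSpace ℝ E] (x y : E) :
    HasDerivAt (fun ε : ℝ => x + ε • y) y 0 := by
  simpa using ((hasDerivAt_id (0 : ℝ)).smul_const y).const_add x

theorem IsWeakSolution.add_smul_sub {φ₁ φ₂ : Ψ} {u₁ u₂ : X}
    (h₁ : IsWeakSolution V e C ℓ φ₁ u₁) (h₂ : IsWeakSolution V e C ℓ φ₂ u₂) (ε : ℝ) :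
    IsWeakSolution V e C ℓ (φ₁ + ε • (φ₂ - φ₁)) (u₁ + ε • (u₂ - u₁)) := by
  intro v hv
  have hres : e (u₁ + ε • (u₂ - u₁)) - (φ₁ + ε • (φ₂ - φ₁))
      = (e u₁ - φ₁) + ε • ((e u₂ - φ₂) - (e u₁ - φ₁)) := by
    simp only [map_add, map_smul, map_sub]
    module
  rw [hres, map_add, map_smul, inner_add_left, real_inner_smul_left, h₁ v hv, map_sub,
    inner_sub_left, h₂ v hv, h₁ v hv, sub_self, mul_zero, add_zero]

theorem energy_eq_of_isWeakSolution (hC : (C : Ψ →ₗ[ℝ] Ψ).IsSymmetric) {φ : Ψ} {u₁ u₂ : X}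
    (hw : u₁ - u₂ ∈ V) (h₁ : IsWeakSolution V e C ℓ φ u₁) (h₂ : IsWeakSolution V e C ℓ φ u₂) :
    energy e C ℓ α u₁ φ = energy e C ℓ α u₂ φ := by
  set w := u₁ - u₂
  have hres : e u₁ - φ = (e u₂ - φ) + e w := by simp only [w, map_sub]; abel
  have hww : ⟪C (e w), e w⟫ = 0 := by
    have := h₁ w hw
    rwa [hres, map_add, inner_add_left, h₂ w hw, add_eq_left] at this
  have hsymm : ⟪C (e w), e u₂ - φ⟫ = ⟪C (e u₂ - φ), e w⟫ :=
    (hC _ _).trans (real_inner_comm _ _)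
  have hℓ : ℓ u₁ = ℓ u₂ + ℓ w := by simp only [w, map_sub]; abel
  simp only [energy]
  rw [hres, hℓ, map_add, inner_add_left, inner_add_right, inner_add_right, hww, hsymm, h₂ w hw]
  ring

theorem hasDerivAt_inner_apply_self (hC : (C : Ψ →ₗ[ℝ] Ψ).IsSymmetric) {γ : ℝ → Ψ} {γ' : Ψ}
    {t : ℝ} (hγ : HasDerivAt γ γ' t) :
    HasDerivAt (fun ε => ⟪C (γ ε), γ ε⟫) (2 * ⟪C (γ t), γ'⟫) t := by
  refine ((C.hasFDerivAt.comp_hasDerivAt t hγ).inner ℝ hγ).congr_deriv ?_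
  have hsymm : ⟪C γ', γ t⟫ = ⟪C (γ t), γ'⟫ := (hC _ _).trans (real_inner_comm _ _)
  simp only [Function.comp_apply] at hsymm ⊢
  rw [hsymm, two_mul]

theorem hasDerivAt_energy_add_smul (hC : (C : Ψ →ₗ[ℝ] Ψ).IsSymmetric) (u d : X) (φ ψ : Ψ) :
    HasDerivAt (fun ε : ℝ => energy e C ℓ α (u + ε • d) (φ + ε • ψ))
      (⟪C (e u - φ), e d - ψ⟫ + (α - 1) * ⟪C φ, ψ⟫ - ℓ d) 0 := by
  have hres := hasDerivAt_inner_apply_self hC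
    ((e.hasFDerivAt.comp_hasDerivAt 0 (hasDerivAt_add_smul u d)).sub (hasDerivAt_add_smul φ ψ))
  have hφ := hasDerivAt_inner_apply_self hC (hasDerivAt_add_smul φ ψ)
  have hℓ := ℓ.hasFDerivAt.comp_hasDerivAt 0 (hasDerivAt_add_smul u d)
  refine (((hres.const_mul (1 / 2)).add (hφ.const_mul ((α - 1) / 2))).sub hℓ).congr_deriv ?_
  simp only [Pi.sub_apply, Function.comp_apply, zero_smul, add_zero]
  ring

theorem IsWeakSolution.hasDerivAt_energy_add_smul (hC : (C : Ψ →ₗ[ℝ] Ψ).IsSymmetric)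
    {φ : Ψ} {u d : X} (hu : IsWeakSolution V e C ℓ φ u) (hd : d ∈ V) (ψ : Ψ) :
    HasDerivAt (fun ε : ℝ => energy e C ℓ α (u + ε • d) (φ + ε • ψ))
      (-⟪C (e u - α • φ), ψ⟫) 0 := by
  refine (Viscoelastic.hasDerivAt_energy_add_smul α hC u d φ ψ).congr_deriv ?_
  rw [inner_sub_right, hu d hd, show e u - α • φ = (e u - φ) - (α - 1) • φ by module,
    map_sub C (e u - φ), map_smul, inner_sub_left, real_inner_smul_left]
  ring

theorem IsWeakSolution.hasDerivAt_reducedEnergy (hC : (C : Ψ →ₗ[ℝ] Ψ).IsSymmetric) {g : X}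
    {ubar : Ψ → X} (hubar_mem : ∀ φ, ubar φ - g ∈ V)
    (hubar : ∀ φ, IsWeakSolution V e C ℓ φ (ubar φ)) {φ : Ψ} {u : X} (hu_mem : u - g ∈ V)
    (hu : IsWeakSolution V e C ℓ φ u) (ψ : Ψ) :
    HasDerivAt (fun ε : ℝ => reducedEnergy e C ℓ α ubar (φ + ε • ψ))
      (-⟪C (e u - α • φ), ψ⟫) 0 := by
  set d := ubar (φ + ψ) - u
  have hd : d ∈ V := by simpa using V.sub_mem (hubar_mem (φ + ψ)) hu_mem
  refine (hu.hasDerivAt_energy_add_smul α hC hd ψ).congr_of_eventuallyEq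
    (Filter.Eventually.of_forall fun ε => ?_)
  have hline := hu.add_smul_sub (hubar (φ + ψ)) ε
  rw [add_sub_cancel_left] at hline
  have hmem : ubar (φ + ε • ψ) - (u + ε • d) ∈ V := by
    convert V.sub_mem (hubar_mem (φ + ε • ψ)) (V.add_mem hu_mem (V.smul_mem ε hd)) using 1
    abel
  exact energy_eq_of_isWeakSolution α hC hmem (hubar _) hline

end Viscoelastic

theorem stmt_16_general
    {X Ψ : Type*}
    [NormedAddCommGroup X] [InnerProductSpace ℝ X]
    [NormedAddCommGroup Ψ] [InnerProductSpace ℝ Ψ]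
    (V : Submodule ℝ X)
    (e : X →L[ℝ] Ψ) (C : Ψ →L[ℝ] Ψ)
    (hCsym : ∀ φ ψ : Ψ, ⟪C φ, ψ⟫ = ⟪φ, C ψ⟫)
    (ℓ : X →L[ℝ] ℝ) (g : X) (α : ℝ)
    (Et : X → Ψ → ℝ)
    (hEt : ∀ u φ, Et u φ =
      (1 / 2) * ⟪C (e u - φ), e u - φ⟫ + ((α - 1) / 2) * ⟪C φ, φ⟫ - ℓ u)
    (ubar : Ψ → X)
    (hubar_mem : ∀ φ : Ψ, ubar φ - g ∈ V)
    (hubar_weak : ∀ φ : Ψ, ∀ v ∈ V, ⟪C (e (ubar φ) - φ), e v⟫ = ℓ v)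
    (Etstar : Ψ → ℝ)
    (hEtstar : ∀ φ : Ψ, Etstar φ = Et (ubar φ) φ)
    (T : ℝ)
    (u : ℝ → X) (φ : ℝ → Ψ) (φ' : ℝ → Ψ)
    (hu_mem : ∀ t ∈ Set.Icc (0 : ℝ) T, u t - g ∈ V)
    (heq1 : ∀ t ∈ Set.Ioo (0 : ℝ) T, ∀ v ∈ V, ⟪C (e (u t) - φ t), e v⟫ = ℓ v)
    (heq2 : ∀ t ∈ Set.Ioo (0 : ℝ) T, φ' t + α • φ t = e (u t)) :
    ∀ t ∈ Set.Ioo (0 : ℝ) T, ∀ ψ : Ψ,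
      HasDerivAt (fun ε : ℝ => Etstar (φ t + ε • ψ)) (-⟪C (φ' t), ψ⟫) 0 := by
  intro t ht ψ
  have hEtstar' : Etstar = Viscoelastic.reducedEnergy e C ℓ α ubar :=
    funext fun χ => (hEtstar χ).trans (hEt _ _)
  have hφ' : φ' t = e (u t) - α • φ t := eq_sub_of_add_eq (heq2 t ht)
  rw [hEtstar', hφ']
  exact Viscoelastic.IsWeakSolution.hasDerivAt_reducedEnergy α hCsym hubar_mem hubar_weak
    (hu_mem t (Set.Ioo_subset_Icc_self ht)) (heq1 t ht) ψ

/-- Gradient flow structure for the hereditary-integral viscoelastic model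
(Remark 3.3(i)): for `α ≥ 1` and a C¹ solution `(u, φ)` of the model
`⟪C(e u − φ), e v⟫ = ℓ(v)` (`v ∈ V`), `φ' + αφ = e u`, one has
`⟪C φ'(t), ψ⟫ = −(∂Ẽ_*)(φ(t))[ψ]`. -/
theorem stmt_16
    {X Ψ : Type*}
    [NormedAddCommGroup X] [InnerProductSpace ℝ X] [CompleteSpace X]
    [NormedAddCommGroup Ψ] [InnerProductSpace ℝ Ψ] [CompleteSpace Ψ]
    (V : Submodule ℝ X) (hV : IsClosed (V : Set X))
    (e : X →L[ℝ] Ψ) (C : Ψ →L[ℝ] Ψ)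
    (hCsym : ∀ φ ψ : Ψ, ⟪C φ, ψ⟫ = ⟪φ, C ψ⟫)
    (cstar : ℝ) (hcstar : 0 < cstar)
    (hCcoer : ∀ ψ : Ψ, cstar * ‖ψ‖ ^ 2 ≤ ⟪C ψ, ψ⟫)
    (c₀ : ℝ) (hc₀ : 0 < c₀)
    (hacoer : ∀ v ∈ V, c₀ * ‖v‖ ^ 2 ≤ ⟪C (e v), e v⟫)
    (ℓ : X →L[ℝ] ℝ) (g : X) (α : ℝ) (hα : 1 ≤ α)
    (Et : X → Ψ → ℝ)
    (hEt : ∀ u φ, Et u φ =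
      (1 / 2) * ⟪C (e u - φ), e u - φ⟫ + ((α - 1) / 2) * ⟪C φ, φ⟫ - ℓ u)
    (ubar : Ψ → X)
    (hubar_mem : ∀ φ : Ψ, ubar φ - g ∈ V)
    (hubar_weak : ∀ φ : Ψ, ∀ v ∈ V, ⟪C (e (ubar φ) - φ), e v⟫ = ℓ v)
    (hubar_min : ∀ φ : Ψ, ∀ v : X, v - g ∈ V → Et (ubar φ) φ ≤ Et v φ)
    (Etstar : Ψ → ℝ)
    (hEtstar : ∀ φ : Ψ, Etstar φ = Et (ubar φ) φ)
    (T : ℝ) (hT : 0 < T)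
    (u : ℝ → X) (φ : ℝ → Ψ) (u' : ℝ → X) (φ' : ℝ → Ψ)
    (hu_deriv : ∀ t ∈ Set.Icc (0 : ℝ) T, HasDerivAt u (u' t) t)
    (hφ_deriv : ∀ t ∈ Set.Icc (0 : ℝ) T, HasDerivAt φ (φ' t) t)
    (hu'_cont : ContinuousOn u' (Set.Icc (0 : ℝ) T))
    (hφ'_cont : ContinuousOn φ' (Set.Icc (0 : ℝ) T))
    (hu_mem : ∀ t ∈ Set.Icc (0 : ℝ) T, u t - g ∈ V)
    (heq1 : ∀ t ∈ Set.Ioo (0 : ℝ) T, ∀ v ∈ V, ⟪C (e (u t) - φ t), e v⟫ = ℓ v)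
    (heq2 : ∀ t ∈ Set.Ioo (0 : ℝ) T, φ' t + α • φ t = e (u t)) :
    ∀ t ∈ Set.Ioo (0 : ℝ) T, ∀ ψ : Ψ,
      HasDerivAt (fun ε : ℝ => Etstar (φ t + ε • ψ)) (-⟪C (φ' t), ψ⟫) 0 :=
  stmt_16_general V e C hCsym ℓ g α Et hEt ubar hubar_mem hubar_weak Etstar hEtstar T u φ φ' hu_mem
    heq1 heq2
end

section
/- Energy decay for the hereditary-integral viscoelastic model (Remark 3.3(ii)): let α ≥ 1, and let (u, φ) : [0, T] → X × Ψ be continuously differentiable with u(t) ∈ g + V for all t, satisfying for all t ∈ (0, T): (a) ⟪C(e u(t) − φ(t)), e v⟫_Ψ = ℓ(v) for all v ∈ V, and (b) φ'(t) + α φ(t) = e u(t) in Ψ. Then t ↦ Ẽ(u(t), φ(t)) is differentiable on (0, T) and (d/dt) Ẽ(u(t), φ(t)) = −⟪C φ'(t), φ'(t)⟫_Ψ ≤ 0. -/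
open scoped RealInnerProductSpace

/-!
Differentiate the energy along the solution. Since `u t - g ∈ V` for all `t` and `V` is closed,
`u' t ∈ V`, so the equilibrium equation tested with `v = u' t` cancels the load term. The flow rule
`e u - φ = φ' + (α - 1) φ` then leaves only `-⟪C φ', φ'⟫`, which is nonpositive by coercivity of `C`.
-/

theorem HasDerivAt.mem_of_eventually_sub_mem {E : Type*} [NormedAddCommGroup E] [NormedSpace ℝ E]
    {V : Submodule ℝ E} (hV : IsClosed (V : Set E)) {u : ℝ → E} {u' : E} {t : ℝ}
    (hu : HasDerivAt u u' t) (hmem : ∀ᶠ s in nhds t, u s - u t ∈ V) : u' ∈ V := by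
  have hslope : ∀ᶠ s in nhdsWithin t {t}ᶜ, slope u t s ∈ (V : Set E) := by
    filter_upwards [nhdsWithin_le_nhds hmem] with s hs
    rw [slope_def_module]
    exact V.smul_mem (s - t)⁻¹ hs
  have hcl := mem_closure_of_tendsto (hasDerivAt_iff_tendsto_slope.mp hu) hslope
  rwa [hV.closure_eq] at hcl

theorem HasDerivAt.inner_apply_self {E : Type*} [NormedAddCommGroup E] [InnerProductSpace ℝ E]
    {C : E →L[ℝ] E} (hC : (C : E →ₗ[ℝ] E).IsSymmetric) {f : ℝ → E} {f' : E} {t : ℝ}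
    (hf : HasDerivAt f f' t) :
    HasDerivAt (fun s => ⟪C (f s), f s⟫) (2 * ⟪C (f t), f'⟫) t := by
  refine ((C.hasFDerivAt.comp_hasDerivAt t hf).inner ℝ hf).congr_deriv ?_
  have hswap : ⟪C f', f t⟫ = ⟪C (f t), f'⟫ := by
    rw [← ContinuousLinearMap.coe_coe, hC, real_inner_comm]
  simp only [Function.comp_apply, hswap]
  ring

section HereditaryEnergy

variable {X Ψ : Type*} [NormedAddCommGroup X] [InnerProductSpace ℝ X]
  [NormedAddCommGroup Ψ] [InnerProductSpace ℝ Ψ]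

noncomputable def hereditaryEnergy (e : X →L[ℝ] Ψ) (C : Ψ →L[ℝ] Ψ) (ℓ : X →L[ℝ] ℝ) (α : ℝ)
    (u : X) (φ : Ψ) : ℝ :=
  (1 / 2) * ⟪C (e u - φ), e u - φ⟫ + ((α - 1) / 2) * ⟪C φ, φ⟫ - ℓ u

variable {e : X →L[ℝ] Ψ} {C : Ψ →L[ℝ] Ψ} {ℓ : X →L[ℝ] ℝ} {α : ℝ}

theorem hasDerivAt_hereditaryEnergy (hC : (C : Ψ →ₗ[ℝ] Ψ).IsSymmetric)
    {u : ℝ → X} {φ : ℝ → Ψ} {u' : X} {φ' : Ψ} {t : ℝ}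
    (hu : HasDerivAt u u' t) (hφ : HasDerivAt φ φ' t) :
    HasDerivAt (fun s => hereditaryEnergy e C ℓ α (u s) (φ s))
      (⟪C (e (u t) - φ t), e u' - φ'⟫ + (α - 1) * ⟪C (φ t), φ'⟫ - ℓ u') t := by
  have hstrain : HasDerivAt (fun s => e (u s) - φ s) (e u' - φ') t :=
    (e.hasFDerivAt.comp_hasDerivAt t hu).sub hφ
  refine ((((hstrain.inner_apply_self hC).const_mul (1 / 2)).add
    ((hφ.inner_apply_self hC).const_mul ((α - 1) / 2))).sub
    (ℓ.hasFDerivAt.comp_hasDerivAt t hu)).congr_deriv ?_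
  ring

theorem hereditaryEnergy_rate_eq {u u' : X} {φ φ' : Ψ}
    (hequil : ⟪C (e u - φ), e u'⟫ = ℓ u') (hflow : φ' + α • φ = e u) :
    ⟪C (e u - φ), e u' - φ'⟫ + (α - 1) * ⟪C φ, φ'⟫ - ℓ u' = -⟪C φ', φ'⟫ := by
  have hstrain : e u - φ = φ' + (α - 1) • φ := by
    rw [← hflow]
    module
  rw [inner_sub_right, hequil, hstrain, map_add, map_smul, inner_add_left, real_inner_smul_left]
  ring

end HereditaryEnergy

theorem stmt_17_general
    {X Ψ : Type*}
    [NormedAddCommGroup X] [InnerProductSpace ℝ X]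
    [NormedAddCommGroup Ψ] [InnerProductSpace ℝ Ψ]
    (V : Submodule ℝ X) (hV : IsClosed (V : Set X))
    (e : X →L[ℝ] Ψ) (C : Ψ →L[ℝ] Ψ)
    (hCsym : ∀ φ ψ : Ψ, ⟪C φ, ψ⟫ = ⟪φ, C ψ⟫)
    (cstar : ℝ) (hcstar : 0 < cstar)
    (hCcoer : ∀ ψ : Ψ, cstar * ‖ψ‖ ^ 2 ≤ ⟪C ψ, ψ⟫)
    (ℓ : X →L[ℝ] ℝ) (g : X) (α : ℝ)
    (Et : X → Ψ → ℝ)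
    (hEt : ∀ u φ, Et u φ =
      (1 / 2) * ⟪C (e u - φ), e u - φ⟫ + ((α - 1) / 2) * ⟪C φ, φ⟫ - ℓ u)
    (T : ℝ)
    (u : ℝ → X) (φ : ℝ → Ψ) (u' : ℝ → X) (φ' : ℝ → Ψ)
    (hu_deriv : ∀ t ∈ Set.Icc (0 : ℝ) T, HasDerivAt u (u' t) t)
    (hφ_deriv : ∀ t ∈ Set.Icc (0 : ℝ) T, HasDerivAt φ (φ' t) t)
    (hu_mem : ∀ t ∈ Set.Icc (0 : ℝ) T, u t - g ∈ V)
    (heq1 : ∀ t ∈ Set.Ioo (0 : ℝ) T, ∀ v ∈ V, ⟪C (e (u t) - φ t), e v⟫ = ℓ v)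
    (heq2 : ∀ t ∈ Set.Ioo (0 : ℝ) T, φ' t + α • φ t = e (u t)) :
    ∀ t ∈ Set.Ioo (0 : ℝ) T,
      HasDerivAt (fun s : ℝ => Et (u s) (φ s)) (-⟪C (φ' t), φ' t⟫) t ∧
      -⟪C (φ' t), φ' t⟫ ≤ 0 := by
  intro t ht
  have hEt' : Et = hereditaryEnergy e C ℓ α := funext₂ hEt
  have hu := hu_deriv t (Set.mem_Icc_of_Ioo ht)
  have hu'V : u' t ∈ V := by
    refine hu.mem_of_eventually_sub_mem hV ?_
    filter_upwards [isOpen_Ioo.mem_nhds ht] with s hs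
    simpa using V.sub_mem (hu_mem s (Set.mem_Icc_of_Ioo hs)) (hu_mem t (Set.mem_Icc_of_Ioo ht))
  refine ⟨?_, neg_nonpos.mpr ((by positivity : 0 ≤ cstar * ‖φ' t‖ ^ 2).trans (hCcoer _))⟩
  rw [hEt', ← hereditaryEnergy_rate_eq (heq1 t ht _ hu'V) (heq2 t ht)]
  exact hasDerivAt_hereditaryEnergy hCsym hu (hφ_deriv t (Set.mem_Icc_of_Ioo ht))

/-- Energy decay for the hereditary-integral viscoelastic model (Remark 3.3(ii)):
for `α ≥ 1` and a C¹ solution `(u, φ)` of the model, `t ↦ Ẽ(u(t), φ(t))` is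
differentiable on `(0, T)` with derivative `−⟪C φ'(t), φ'(t)⟫ ≤ 0`. -/
theorem stmt_17
    {X Ψ : Type*}
    [NormedAddCommGroup X] [InnerProductSpace ℝ X] [CompleteSpace X]
    [NormedAddCommGroup Ψ] [InnerProductSpace ℝ Ψ] [CompleteSpace Ψ]
    (V : Submodule ℝ X) (hV : IsClosed (V : Set X))
    (e : X →L[ℝ] Ψ) (C : Ψ →L[ℝ] Ψ)
    (hCsym : ∀ φ ψ : Ψ, ⟪C φ, ψ⟫ = ⟪φ, C ψ⟫)
    (cstar : ℝ) (hcstar : 0 < cstar)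
    (hCcoer : ∀ ψ : Ψ, cstar * ‖ψ‖ ^ 2 ≤ ⟪C ψ, ψ⟫)
    (c₀ : ℝ) (hc₀ : 0 < c₀)
    (hacoer : ∀ v ∈ V, c₀ * ‖v‖ ^ 2 ≤ ⟪C (e v), e v⟫)
    (ℓ : X →L[ℝ] ℝ) (g : X) (α : ℝ) (hα : 1 ≤ α)
    (Et : X → Ψ → ℝ)
    (hEt : ∀ u φ, Et u φ =
      (1 / 2) * ⟪C (e u - φ), e u - φ⟫ + ((α - 1) / 2) * ⟪C φ, φ⟫ - ℓ u)
    (T : ℝ) (hT : 0 < T)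
    (u : ℝ → X) (φ : ℝ → Ψ) (u' : ℝ → X) (φ' : ℝ → Ψ)
    (hu_deriv : ∀ t ∈ Set.Icc (0 : ℝ) T, HasDerivAt u (u' t) t)
    (hφ_deriv : ∀ t ∈ Set.Icc (0 : ℝ) T, HasDerivAt φ (φ' t) t)
    (hu'_cont : ContinuousOn u' (Set.Icc (0 : ℝ) T))
    (hφ'_cont : ContinuousOn φ' (Set.Icc (0 : ℝ) T))
    (hu_mem : ∀ t ∈ Set.Icc (0 : ℝ) T, u t - g ∈ V)
    (heq1 : ∀ t ∈ Set.Ioo (0 : ℝ) T, ∀ v ∈ V, ⟪C (e (u t) - φ t), e v⟫ = ℓ v)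
    (heq2 : ∀ t ∈ Set.Ioo (0 : ℝ) T, φ' t + α • φ t = e (u t)) :
    ∀ t ∈ Set.Ioo (0 : ℝ) T,
      HasDerivAt (fun s : ℝ => Et (u s) (φ s)) (-⟪C (φ' t), φ' t⟫) t ∧
      -⟪C (φ' t), φ' t⟫ ≤ 0 :=
  stmt_17_general V hV e C hCsym cstar hcstar hCcoer ℓ g α Et hEt T u φ u' φ' hu_deriv hφ_deriv
    hu_mem heq1 heq2
end
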